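/- arXiv:1511.09139 — 8 statements merged into one kernel-verified Lean document; each statement's English description precedes it below -/
import Mathlib

section
/- Let n ≥ 1, let r = (r₁, …, rₙ) with each rᵢ > 0, let m > 0 and p ≥ 1, and let η : ℝⁿ → ℝ and γ : ℝⁿ → ℝ be continuous functions that are r-homogeneous of degree m (i.e., η(ε^{r₁}x₁, …, ε^{rₙ}xₙ) = ε^m η(x) and likewise for γ, for all ε > 0 and all x), with γ(x) ≥ 0 for all x. Assume that every x ≠ 0 with γ(x) = 0 satisfies η(x) < 0. Then there exist λ* ∈ ℝ and c > 0 such that for every λ ≥ λ* and every x ≠ 0, η(x) − λ·γ(x) ≤ −c·‖x‖_{r,p}^m. -/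
/-- Lemma 2 (homogeneous domination): if `η` and `γ ≥ 0` are continuous, `r`-homogeneous of
degree `m > 0`, and `η < 0` on the nonzero zero-set of `γ`, then there are `λ*` and `c > 0`
such that `η(x) − λ·γ(x) ≤ −c·‖x‖_{r,p}^m` for all `λ ≥ λ*` and all `x ≠ 0`. -/
theorem homogeneous_domination (n : ℕ) (hn : 1 ≤ n) (r : Fin n → ℝ) (hr : ∀ i, 0 < r i)
    (m p : ℝ) (hm : 0 < m) (hp : 1 ≤ p)
    (η γ : (Fin n → ℝ) → ℝ) (hηcont : Continuous η) (hγcont : Continuous γ)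
    (hηhom : ∀ ε > (0 : ℝ), ∀ x : Fin n → ℝ, η (fun i => ε ^ (r i) * x i) = ε ^ m * η x)
    (hγhom : ∀ ε > (0 : ℝ), ∀ x : Fin n → ℝ, γ (fun i => ε ^ (r i) * x i) = ε ^ m * γ x)
    (hγnonneg : ∀ x, 0 ≤ γ x)
    (hneg : ∀ x : Fin n → ℝ, x ≠ 0 → γ x = 0 → η x < 0) :
    ∃ lamStar : ℝ, ∃ c > (0 : ℝ), ∀ lam ≥ lamStar, ∀ x : Fin n → ℝ, x ≠ 0 →
      η x - lam * γ x ≤ -c * ((∑ i, |x i| ^ (p / r i)) ^ (1 / p)) ^ m := by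
  classical
  have hp0 : (0 : ℝ) < p := lt_of_lt_of_le one_pos hp
  have hq : ∀ i, 0 < p / r i := fun i => div_pos hp0 (hr i)
  set g : (Fin n → ℝ) → ℝ := fun x => ∑ i, |x i| ^ (p / r i) with hgdef
  have hrc : ∀ q : ℝ, 0 < q → Continuous fun t : ℝ => t ^ q := by
    intro q hq0
    rw [continuous_iff_continuousAt]
    intro t
    exact Real.continuousAt_rpow_const t q (Or.inr hq0.le)
  have hgcont : Continuous g := by
    apply continuous_finset_sum
    intro i _
    exact (hrc (p / r i) (hq i)).comp (continuous_abs.comp (continuous_apply i))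
  have hgnonneg : ∀ (x : Fin n → ℝ) (i : Fin n), (0 : ℝ) ≤ |x i| ^ (p / r i) :=
    fun x i => Real.rpow_nonneg (abs_nonneg _) _
  -- the homogeneous unit sphere
  set S : Set (Fin n → ℝ) := g ⁻¹' {1} with hSdef
  have hSclosed : IsClosed S := isClosed_singleton.preimage hgcont
  have hSsub : S ⊆ Set.univ.pi fun _ : Fin n => Set.Icc (-1 : ℝ) 1 := by
    intro x hx i _
    have hsum : g x = 1 := hx
    have hle : |x i| ^ (p / r i) ≤ 1 := by
      rw [← hsum]
      exact Finset.single_le_sum (fun j _ => hgnonneg x j) (Finset.mem_univ i)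
    have habs : |x i| ≤ 1 := by
      by_contra h
      push_neg at h
      have := Real.one_lt_rpow_iff_of_pos (lt_trans one_pos h) (y := p / r i)
      have h1 : 1 < |x i| ^ (p / r i) := this.mpr (Or.inl ⟨h, hq i⟩)
      linarith
    exact abs_le.mp habs
  have hScompact : IsCompact S :=
    (isCompact_univ_pi fun _ => isCompact_Icc).of_isClosed_subset hSclosed hSsub
  -- S is nonempty
  have hSne : S.Nonempty := by
    refine ⟨fun i => if i = ⟨0, hn⟩ then 1 else 0, ?_⟩
    show g _ = 1
    simp only [hgdef]
    rw [Finset.sum_eq_single ⟨0, hn⟩]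
    · simp
    · intro j _ hj
      simp [hj, Real.zero_rpow (ne_of_gt (hq j))]
    · simp
  have hSne0 : ∀ x ∈ S, x ≠ 0 := by
    intro x hx hx0
    have h1 : g x = 1 := hx
    have h0 : g x = 0 := by
      rw [hx0]
      simp only [hgdef]
      apply Finset.sum_eq_zero
      intro j _
      simp [Real.zero_rpow (ne_of_gt (hq j))]
    rw [h0] at h1
    norm_num at h1
  -- minimum of max(-η, γ) on S is positive
  set h : (Fin n → ℝ) → ℝ := fun x => max (-η x) (γ x) with hhdef
  have hhcont : Continuous h := (hηcont.neg).max hγcont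
  obtain ⟨x₀, hx₀S, hx₀min⟩ := hScompact.exists_isMinOn hSne hhcont.continuousOn
  set δ : ℝ := h x₀ with hδdef
  have hδpos : 0 < δ := by
    rcases eq_or_lt_of_le (hγnonneg x₀) with hγ0 | hγ0
    · have := hneg x₀ (hSne0 x₀ hx₀S) hγ0.symm
      exact lt_max_of_lt_left (by linarith)
    · exact lt_max_of_lt_right hγ0
  have hδle : ∀ y ∈ S, δ ≤ h y := fun y hy => hx₀min hy
  -- maximum of η on S
  obtain ⟨x₁, hx₁S, hx₁max⟩ := hScompact.exists_isMaxOn hSne hηcont.continuousOn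
  set M : ℝ := η x₁ with hMdef
  have hMle : ∀ y ∈ S, η y ≤ M := fun y hy => hx₁max hy
  -- the key bound on the sphere
  have key : ∀ lam ≥ max 0 ((M + δ) / δ), ∀ y ∈ S, η y - lam * γ y ≤ -δ := by
    intro lam hlam y hy
    have hlam0 : 0 ≤ lam := le_trans (le_max_left _ _) hlam
    have hlam1 : (M + δ) / δ ≤ lam := le_trans (le_max_right _ _) hlam
    rcases le_max_iff.mp (hδle y hy) with h1 | h2
    · have : η y ≤ -δ := by linarith
      nlinarith [hγnonneg y]
    · have hMy := hMle y hy
      have : (M + δ) ≤ lam * δ := by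
        rw [div_le_iff₀ hδpos] at hlam1
        linarith
      nlinarith
  refine ⟨max 0 ((M + δ) / δ), δ, hδpos, ?_⟩
  intro lam hlam x hx
  -- scaling
  have hgx : 0 < g x := by
    obtain ⟨i, hi⟩ := Function.ne_iff.mp hx
    apply Finset.sum_pos' (fun j _ => hgnonneg x j)
    exact ⟨i, Finset.mem_univ i, Real.rpow_pos_of_pos (abs_pos.mpr hi) _⟩
  set s : ℝ := (g x) ^ (1 / p) with hsdef
  have hs : 0 < s := Real.rpow_pos_of_pos hgx _
  set y : Fin n → ℝ := fun i => s ^ (-(r i)) * x i with hydef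
  have hxy : x = fun i => s ^ (r i) * y i := by
    funext i
    simp only [hydef]
    rw [← mul_assoc, ← Real.rpow_add hs]
    simp
  have hyS : y ∈ S := by
    show g y = 1
    have : ∀ i, |y i| ^ (p / r i) = s ^ (-p) * |x i| ^ (p / r i) := by
      intro i
      simp only [hydef]
      rw [abs_mul, abs_of_pos (Real.rpow_pos_of_pos hs _),
        Real.mul_rpow (Real.rpow_pos_of_pos hs _).le (abs_nonneg _),
        ← Real.rpow_mul hs.le]
      congr 2
      have hri := (hr i).ne'
      field_simp
    simp only [hgdef]
    rw [Finset.sum_congr rfl fun i _ => this i, ← Finset.mul_sum]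
    have : s ^ (-p) = (g x)⁻¹ := by
      rw [hsdef, ← Real.rpow_mul hgx.le]
      rw [show (1 / p) * (-p) = -1 by field_simp]
      rw [Real.rpow_neg_one]
    rw [this, inv_mul_cancel₀ (ne_of_gt hgx)]
  have hηx : η x = s ^ m * η y := by rw [hxy]; exact hηhom s hs y
  have hγx : γ x = s ^ m * γ y := by rw [hxy]; exact hγhom s hs y
  have hsm : 0 < s ^ m := Real.rpow_pos_of_pos hs _
  have hkey := key lam hlam y hyS
  calc η x - lam * γ x = s ^ m * (η y - lam * γ y) := by rw [hηx, hγx]; ring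
    _ ≤ s ^ m * (-δ) := by
        exact mul_le_mul_of_nonneg_left hkey hsm.le
    _ = -δ * ((g x) ^ (1 / p)) ^ m := by rw [hsdef]; ring
end

section
/- Let k₁ > 0, and for (x₁, x₂, x₃) ∈ ℝ³ set ξ₁ = x₁ − k₁^{−3}⌈x₃⌋³. For every γ₁₂ ∈ ℝ there exists γ₁⁰ > 0 such that for all γ₁ ≥ γ₁⁰ the function V(x₁, x₂, x₃) = γ₁|ξ₁|^{5/3} + γ₁₂·ξ₁·x₂ + |x₂|^{5/2} + (1/5)|x₃|⁵ is positive definite on ℝ³, i.e., V(0,0,0) = 0 and V(x₁, x₂, x₃) > 0 for every (x₁, x₂, x₃) ≠ (0,0,0). -/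
/-- Signed power: `⌈z⌋^p = |z|^p · sign z`. -/
noncomputable def spow (z p : ℝ) : ℝ := |z| ^ p * Real.sign z

/-- Positive definiteness of the Lyapunov function
`V(x₁,x₂,x₃) = γ₁|ξ₁|^{5/3} + γ₁₂ ξ₁ x₂ + |x₂|^{5/2} + (1/5)|x₃|⁵`,
where `ξ₁ = x₁ − k₁⁻³⌈x₃⌋³`, for `γ₁` sufficiently large. -/
theorem lyapunov_V_posdef (k₁ : ℝ) (hk₁ : 0 < k₁) (γ₁₂ : ℝ) :
    ∃ γ₁0 > (0 : ℝ), ∀ γ₁ ≥ γ₁0,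
      (γ₁ * |(0 : ℝ) - spow 0 3 / k₁ ^ 3| ^ ((5 : ℝ)/3)
          + γ₁₂ * ((0 : ℝ) - spow 0 3 / k₁ ^ 3) * 0 + |(0 : ℝ)| ^ ((5 : ℝ)/2)
          + (1/5) * |(0 : ℝ)| ^ (5 : ℝ) = 0) ∧
      ∀ x₁ x₂ x₃ : ℝ, (x₁, x₂, x₃) ≠ (0, 0, 0) →
        0 < γ₁ * |x₁ - spow x₃ 3 / k₁ ^ 3| ^ ((5 : ℝ)/3)
            + γ₁₂ * (x₁ - spow x₃ 3 / k₁ ^ 3) * x₂ + |x₂| ^ ((5 : ℝ)/2)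
            + (1/5) * |x₃| ^ (5 : ℝ) := by
  have hconj : ((5 : ℝ)/3).HolderConjugate ((5 : ℝ)/2) := ⟨by norm_num, by norm_num, by norm_num⟩
  set C : ℝ := (3/5) * |γ₁₂| ^ ((5 : ℝ)/3) with hC
  have hC0 : 0 ≤ C := by positivity
  refine ⟨C + 1, by positivity, fun γ₁ hγ₁ => ⟨?_, ?_⟩⟩
  · simp [spow, Real.sign_zero, Real.zero_rpow (by norm_num : ((5:ℝ)/3) ≠ 0),
      Real.zero_rpow (by norm_num : ((5:ℝ)/2) ≠ 0),
      Real.zero_rpow (by norm_num : (5:ℝ) ≠ 0)]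
  · intro x₁ x₂ x₃ hne
    set ξ : ℝ := x₁ - spow x₃ 3 / k₁ ^ 3 with hξ
    -- Young's inequality bound on the cross term
    have hyoung : |γ₁₂| * |ξ| * |x₂| ≤ C * |ξ| ^ ((5:ℝ)/3) + (2/5) * |x₂| ^ ((5:ℝ)/2) := by
      have h := Real.young_inequality_of_nonneg
        (mul_nonneg (abs_nonneg γ₁₂) (abs_nonneg ξ)) (abs_nonneg x₂) hconj
      have hmul : (|γ₁₂| * |ξ|) ^ ((5:ℝ)/3) = |γ₁₂| ^ ((5:ℝ)/3) * |ξ| ^ ((5:ℝ)/3) :=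
        Real.mul_rpow (abs_nonneg _) (abs_nonneg _)
      rw [hmul] at h
      rw [hC]
      nlinarith [h]
    have hcross : -(C * |ξ| ^ ((5:ℝ)/3) + (2/5) * |x₂| ^ ((5:ℝ)/2)) ≤ γ₁₂ * ξ * x₂ := by
      have h1 : |γ₁₂ * ξ * x₂| = |γ₁₂| * |ξ| * |x₂| := by rw [abs_mul, abs_mul]
      have h2 : -(|γ₁₂ * ξ * x₂|) ≤ γ₁₂ * ξ * x₂ := neg_abs_le _
      rw [h1] at h2
      exact le_trans (neg_le_neg hyoung) h2
    have hγ : γ₁ * |ξ| ^ ((5:ℝ)/3) ≥ (C + 1) * |ξ| ^ ((5:ℝ)/3) :=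
      mul_le_mul_of_nonneg_right hγ₁ (Real.rpow_nonneg (abs_nonneg _) _)
    have hx2nn : (0:ℝ) ≤ |x₂| ^ ((5:ℝ)/2) := Real.rpow_nonneg (abs_nonneg _) _
    have hx3nn : (0:ℝ) ≤ |x₃| ^ (5:ℝ) := Real.rpow_nonneg (abs_nonneg _) _
    have hξnn : (0:ℝ) ≤ |ξ| ^ ((5:ℝ)/3) := Real.rpow_nonneg (abs_nonneg _) _
    -- one of the three terms is strictly positive
    have hpos : 0 < |ξ| ^ ((5:ℝ)/3) + (3/5) * |x₂| ^ ((5:ℝ)/2) + (1/5) * |x₃| ^ (5:ℝ) := by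
      by_cases h3 : x₃ = 0
      · by_cases h2 : x₂ = 0
        · have h1 : x₁ ≠ 0 := by
            intro h1; exact hne (by simp [h1, h2, h3])
          have hξ0 : ξ = x₁ := by
            simp [hξ, h3, spow, Real.sign_zero]
          have : 0 < |ξ| ^ ((5:ℝ)/3) :=
            Real.rpow_pos_of_pos (abs_pos.mpr (hξ0 ▸ h1)) _
          linarith
        · have : 0 < |x₂| ^ ((5:ℝ)/2) := Real.rpow_pos_of_pos (abs_pos.mpr h2) _
          linarith
      · have : 0 < |x₃| ^ (5:ℝ) := Real.rpow_pos_of_pos (abs_pos.mpr h3) _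
        linarith
    nlinarith [hγ, hcross, hpos]
end

section
/- Let k₁ > 0, k₂ > 0, γ₁ > 0 and define W₁(ξ₁, x₂) = (5/2)(k₁/k₂)³·((2/3)(k₂/k₁)³γ₁⌈ξ₁⌋^{2/3} + x₂)·x₂ − (5/2)k₂·((k₁/k₂)³ξ₁ + ⌈x₂⌋^{3/2})·((k₁/k₂)⌈ξ₁⌋^{1/3} + ⌈x₂⌋^{1/2}). Then for every ξ₁ ∈ ℝ, setting x₂ = −(k₁/k₂)²⌈ξ₁⌋^{2/3}, one has W₁(ξ₁, x₂) = −(5/2)(k₁/k₂)⁵·((2/3)(k₂/k₁)³γ₁ − (k₁/k₂)²)·|ξ₁|^{4/3}; in particular this value is strictly negative for every ξ₁ ≠ 0 if and only if γ₁ > (3/2)(k₁/k₂)⁵. -/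
lemma spow_zero (p : ℝ) : spow 0 p = 0 := by simp [spow]

lemma spow_of_pos {z : ℝ} (hz : 0 < z) (p : ℝ) : spow z p = z ^ p := by
  simp [spow, abs_of_pos hz, Real.sign_of_pos hz]

lemma spow_of_neg {z : ℝ} (hz : z < 0) (p : ℝ) : spow z p = -(-z) ^ p := by
  simp [spow, abs_of_neg hz, Real.sign_of_neg hz]

lemma aux_rpow (k a : ℝ) (hk : 0 ≤ k) (ha : 0 ≤ a) :
    (k^2 * a ^ ((2:ℝ)/3)) ^ ((3:ℝ)/2) = k^3 * a ∧
    (k^2 * a ^ ((2:ℝ)/3)) ^ ((1:ℝ)/2) = k * a ^ ((1:ℝ)/3) := by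
  constructor <;>
  · rw [Real.mul_rpow (by positivity) (by positivity), ← Real.rpow_natCast k 2,
      ← Real.rpow_mul hk, ← Real.rpow_mul ha]
    norm_num [Real.rpow_natCast]
    try (left; norm_cast)

lemma key32 (k ξ : ℝ) (hk : 0 < k) :
    spow (-k ^ 2 * spow ξ (2/3)) (3/2) = -(k ^ 3 * ξ) := by
  rcases lt_trichotomy ξ 0 with hξ | hξ | hξ
  · rw [spow_of_neg hξ]
    have h1 : (0:ℝ) < -k ^ 2 * -(-ξ) ^ ((2:ℝ)/3) := by
      have h0 := Real.rpow_pos_of_pos (neg_pos.2 hξ) ((2:ℝ)/3)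
      have := mul_pos (pow_pos hk 2) h0; nlinarith
    rw [spow_of_pos h1]
    have := (aux_rpow k (-ξ) hk.le (by linarith)).1
    rw [show -k ^ 2 * -(-ξ) ^ ((2:ℝ)/3) = k^2 * (-ξ) ^ ((2:ℝ)/3) by ring, this]
    ring
  · simp [hξ, spow_zero]
  · rw [spow_of_pos hξ]
    have h1 : -k ^ 2 * ξ ^ ((2:ℝ)/3) < 0 := by
      have h0 := Real.rpow_pos_of_pos hξ ((2:ℝ)/3)
      have := mul_pos (pow_pos hk 2) h0; nlinarith
    rw [spow_of_neg h1]
    have := (aux_rpow k ξ hk.le hξ.le).1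
    rw [show -(-k ^ 2 * ξ ^ ((2:ℝ)/3)) = k^2 * ξ ^ ((2:ℝ)/3) by ring, this]

lemma key12 (k ξ : ℝ) (hk : 0 < k) :
    spow (-k ^ 2 * spow ξ (2/3)) (1/2) = -(k * spow ξ (1/3)) := by
  rcases lt_trichotomy ξ 0 with hξ | hξ | hξ
  · rw [spow_of_neg hξ, spow_of_neg hξ]
    have h1 : (0:ℝ) < -k ^ 2 * -(-ξ) ^ ((2:ℝ)/3) := by
      have h0 := Real.rpow_pos_of_pos (neg_pos.2 hξ) ((2:ℝ)/3)
      have := mul_pos (pow_pos hk 2) h0; nlinarith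
    rw [spow_of_pos h1]
    have := (aux_rpow k (-ξ) hk.le (by linarith)).2
    rw [show -k ^ 2 * -(-ξ) ^ ((2:ℝ)/3) = k^2 * (-ξ) ^ ((2:ℝ)/3) by ring, this]
    ring
  · simp [hξ, spow_zero]
  · rw [spow_of_pos hξ, spow_of_pos hξ]
    have h1 : -k ^ 2 * ξ ^ ((2:ℝ)/3) < 0 := by
      have h0 := Real.rpow_pos_of_pos hξ ((2:ℝ)/3)
      have := mul_pos (pow_pos hk 2) h0; nlinarith
    rw [spow_of_neg h1]
    have := (aux_rpow k ξ hk.le hξ.le).2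
    rw [show -(-k ^ 2 * ξ ^ ((2:ℝ)/3)) = k^2 * ξ ^ ((2:ℝ)/3) by ring, this]

lemma spow_sq (ξ : ℝ) : spow ξ (2/3) * spow ξ (2/3) = |ξ| ^ ((4:ℝ)/3) := by
  rcases eq_or_ne ξ 0 with h | h
  · simp [h, spow_zero]
  · have hs : Real.sign ξ * Real.sign ξ = 1 := by
      rcases lt_or_gt_of_ne h with h' | h'
      · rw [Real.sign_of_neg h']; ring
      · rw [Real.sign_of_pos h']; ring
    unfold spow
    rw [show |ξ| ^ ((2:ℝ)/3) * Real.sign ξ * (|ξ| ^ ((2:ℝ)/3) * Real.sign ξ)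
        = |ξ| ^ ((2:ℝ)/3) * |ξ| ^ ((2:ℝ)/3) * (Real.sign ξ * Real.sign ξ) by ring,
      hs, ← Real.rpow_add (abs_pos.2 h)]
    norm_num

/-- The part `W₁` of the Lyapunov derivative. -/
noncomputable def W₁ (k₁ k₂ γ₁ ξ₁ x₂ : ℝ) : ℝ :=
  (5/2) * (k₁/k₂) ^ 3 * ((2/3) * (k₂/k₁) ^ 3 * γ₁ * spow ξ₁ (2/3) + x₂) * x₂
    - (5/2) * k₂ * ((k₁/k₂) ^ 3 * ξ₁ + spow x₂ (3/2))
      * ((k₁/k₂) * spow ξ₁ (1/3) + spow x₂ (1/2))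

/-- Evaluation of `W₁` on the set `S₁ = {x₂ = −(k₁/k₂)²⌈ξ₁⌋^{2/3}}`, and the criterion
`γ₁ > (3/2)(k₁/k₂)⁵` for strict negativity there. -/
theorem W₁_on_S₁ (k₁ k₂ γ₁ : ℝ) (hk₁ : 0 < k₁) (hk₂ : 0 < k₂) (hγ₁ : 0 < γ₁) :
    (∀ ξ₁ : ℝ,
      W₁ k₁ k₂ γ₁ ξ₁ (-(k₁/k₂) ^ 2 * spow ξ₁ (2/3)) =
        -(5/2) * (k₁/k₂) ^ 5 * ((2/3) * (k₂/k₁) ^ 3 * γ₁ - (k₁/k₂) ^ 2)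
          * |ξ₁| ^ ((4 : ℝ)/3)) ∧
    ((∀ ξ₁ : ℝ, ξ₁ ≠ 0 →
        W₁ k₁ k₂ γ₁ ξ₁ (-(k₁/k₂) ^ 2 * spow ξ₁ (2/3)) < 0) ↔
      γ₁ > (3/2) * (k₁/k₂) ^ 5) := by
  have hk : 0 < k₁/k₂ := div_pos hk₁ hk₂
  have hmain : ∀ ξ₁ : ℝ,
      W₁ k₁ k₂ γ₁ ξ₁ (-(k₁/k₂) ^ 2 * spow ξ₁ (2/3)) =
        -(5/2) * (k₁/k₂) ^ 5 * ((2/3) * (k₂/k₁) ^ 3 * γ₁ - (k₁/k₂) ^ 2)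
          * |ξ₁| ^ ((4 : ℝ)/3) := by
    intro ξ₁
    have h1 := key32 (k₁/k₂) ξ₁ hk
    have h2 := key12 (k₁/k₂) ξ₁ hk
    have hs := spow_sq ξ₁
    unfold W₁
    rw [h1, h2]
    linear_combination (-(5/2) * (k₁/k₂) ^ 5 *
      ((2/3) * (k₂/k₁) ^ 3 * γ₁ - (k₁/k₂) ^ 2)) * hs
  refine ⟨hmain, ?_⟩
  have hB : 0 < (k₂/k₁) ^ 3 := by positivity
  have hKB : (k₂/k₁) ^ 3 * (k₁/k₂) ^ 3 = 1 := by field_simp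
  have hA : ((2/3) * (k₂/k₁) ^ 3 * γ₁ - (k₁/k₂) ^ 2 > 0) ↔ γ₁ > (3/2) * (k₁/k₂) ^ 5 := by
    constructor
    · intro h
      have h2 : 0 < ((2/3) * (k₂/k₁) ^ 3 * γ₁ - (k₁/k₂) ^ 2) * (k₁/k₂) ^ 3 :=
        mul_pos h (pow_pos hk 3)
      have h3 : (0:ℝ) < (2:ℝ)/3 * γ₁ - (k₁/k₂) ^ 5 := by nlinarith [h2, hKB, hγ₁]
      linarith
    · intro h
      have h3 : (0:ℝ) < (2:ℝ)/3 * γ₁ - (k₁/k₂) ^ 5 := by linarith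
      have h2 := mul_pos h3 hB
      nlinarith [h2, hKB, pow_pos hk 2]
  constructor
  · intro h
    have h1 := h 1 one_ne_zero
    rw [hmain 1] at h1
    norm_num at h1
    rw [← hA]
    nlinarith [pow_pos hk 5, h1]
  · intro h ξ₁ hξ
    rw [hmain ξ₁]
    have hApos := hA.2 h
    have he : (0:ℝ) < |ξ₁| ^ ((4:ℝ)/3) := Real.rpow_pos_of_pos (abs_pos.2 hξ) _
    have := mul_pos (mul_pos (pow_pos hk 5) hApos) he
    nlinarith [this]
end

section
/- For every k₁ > 0 there exist k₂ > 0, γ₁ > (3/2)(k₁/k₂)⁵ and c > 0 such that for all (ξ₁, x₂) ∈ ℝ²: (5/2)(k₁/k₂)³·((2/3)(k₂/k₁)³γ₁⌈ξ₁⌋^{2/3} + x₂)·x₂ − (5/2)k₂·((k₁/k₂)³ξ₁ + ⌈x₂⌋^{3/2})·((k₁/k₂)⌈ξ₁⌋^{1/3} + ⌈x₂⌋^{1/2}) ≤ −c·(|ξ₁|^{4/3} + |x₂|²). -/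
lemma sign_cube (z : ℝ) : (Real.sign z) ^ 3 = Real.sign z := by
  rcases lt_trichotomy z 0 with h|h|h
  · rw [Real.sign_of_neg h]; norm_num
  · rw [h, Real.sign_zero]; norm_num
  · rw [Real.sign_of_pos h]; norm_num

lemma real_abs_mul_sign (z : ℝ) : |z| * Real.sign z = z := by
  rcases lt_trichotomy z 0 with h|h|h
  · rw [Real.sign_of_neg h, abs_of_neg h]; ring
  · rw [h, Real.sign_zero]; norm_num
  · rw [Real.sign_of_pos h, abs_of_pos h]; ring

lemma abs_spow (z : ℝ) {p : ℝ} (hp : p ≠ 0) : |spow z p| = |z| ^ p := by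
  unfold spow
  rw [abs_mul]
  rcases eq_or_ne z 0 with h|h
  · simp [h, Real.zero_rpow hp]
  · have h1 : |Real.sign z| = 1 := by
      rcases lt_trichotomy z 0 with h'|h'|h'
      · rw [Real.sign_of_neg h']; norm_num
      · exact absurd h' h
      · rw [Real.sign_of_pos h']; norm_num
    rw [h1, mul_one, abs_of_nonneg (Real.rpow_nonneg (abs_nonneg z) p)]

lemma rpow_abs_mul_self (z : ℝ) {p q : ℝ} (h : p + p = q) (hq : q ≠ 0) :
    |z| ^ p * |z| ^ p = |z| ^ q := by
  rw [← h, Real.rpow_add' (abs_nonneg z) (h ▸ hq)]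

lemma spow_third_cube (z : ℝ) : (spow z (1/3)) ^ 3 = z := by
  unfold spow
  rw [mul_pow, sign_cube, ← Real.rpow_natCast (|z| ^ ((1:ℝ)/3)) 3,
    ← Real.rpow_mul (abs_nonneg z)]
  norm_num [real_abs_mul_sign]

lemma spow_half_cube (z : ℝ) : (spow z (1/2)) ^ 3 = spow z (3/2) := by
  unfold spow
  rw [mul_pow, sign_cube, ← Real.rpow_natCast (|z| ^ ((1:ℝ)/2)) 3,
    ← Real.rpow_mul (abs_nonneg z)]
  norm_num

lemma spow_two_thirds (z : ℝ) : spow z (2/3) = spow z (1/3) * |spow z (1/3)| := by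
  rw [abs_spow z (by norm_num : (1/3:ℝ) ≠ 0)]
  unfold spow
  have : |z| ^ ((1:ℝ)/3) * |z| ^ ((1:ℝ)/3) = |z| ^ ((2:ℝ)/3) :=
    rpow_abs_mul_self z (by norm_num) (by norm_num)
  rw [← this]; ring

lemma spow_half_mul_abs (z : ℝ) : spow z (1/2) * |spow z (1/2)| = z := by
  rw [abs_spow z (by norm_num : (1/2:ℝ) ≠ 0)]
  unfold spow
  have h : |z| ^ ((1:ℝ)/2) * |z| ^ ((1:ℝ)/2) = |z| ^ ((1:ℝ)) :=
    rpow_abs_mul_self z (by norm_num) (by norm_num)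
  calc |z| ^ ((1:ℝ)/2) * Real.sign z * |z| ^ ((1:ℝ)/2)
      = |z| ^ ((1:ℝ)/2) * |z| ^ ((1:ℝ)/2) * Real.sign z := by ring
    _ = z := by rw [h, Real.rpow_one, real_abs_mul_sign]

lemma spow_third_fourth (z : ℝ) : |z| ^ ((4:ℝ)/3) = (spow z (1/3)) ^ 4 := by
  have h : (spow z (1/3)) ^ 4 = |spow z (1/3)| ^ 4 := by
    rw [← abs_pow]; exact (abs_of_nonneg (by positivity)).symm
  rw [h, abs_spow z (by norm_num : (1/3:ℝ) ≠ 0),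
    ← Real.rpow_natCast (|z| ^ ((1:ℝ)/3)) 4, ← Real.rpow_mul (abs_nonneg z)]
  norm_num

lemma spow_half_fourth (z : ℝ) : |z| ^ 2 = (spow z (1/2)) ^ 4 := by
  have h : (spow z (1/2)) ^ 4 = |spow z (1/2)| ^ 4 := by
    rw [← abs_pow]; exact (abs_of_nonneg (by positivity)).symm
  rw [h, abs_spow z (by norm_num : (1/2:ℝ) ≠ 0),
    ← Real.rpow_natCast (|z| ^ ((1:ℝ)/2)) 4, ← Real.rpow_mul (abs_nonneg z),
    show ((1:ℝ)/2 * (4:ℕ)) = ((2:ℕ):ℝ) by norm_num, Real.rpow_natCast]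

lemma core (ρ K x y : ℝ) (hρ1 : ρ ≤ 1/64) (hK : 4 ≤ K) :
    (x*|x|)*(y*|y|) + ρ*y^4 - K*((x^3+y^3)*(x+y)) ≤ -(1/8)*(x^4+y^4) := by
  have hq : (0:ℝ) ≤ x^2 - x*y + y^2 := by
    nlinarith [sq_nonneg (x-y), sq_nonneg x, sq_nonneg y]
  have hS : (0:ℝ) ≤ (x^3+y^3)*(x+y) := by nlinarith [mul_nonneg (sq_nonneg (x+y)) hq]
  have hKS : K*((x^3+y^3)*(x+y)) ≥ 4*((x^3+y^3)*(x+y)) := by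
    nlinarith [mul_nonneg (by linarith : (0:ℝ) ≤ K - 4) hS]
  have habs : (x*|x|)*(y*|y|) = (x*y)*|x*y| := by rw [abs_mul]; ring
  rw [habs]
  rcases le_total 0 (x*y) with h|h
  · rw [abs_of_nonneg h]
    nlinarith [sq_nonneg (x^2-y^2), sq_nonneg (x*y),
      mul_nonneg h (add_nonneg (sq_nonneg x) (sq_nonneg y)), sq_nonneg (y^2)]
  · rw [abs_of_nonpos h]
    nlinarith [sq_nonneg (x*y + (x^2+y^2)), sq_nonneg (x^2-y^2), sq_nonneg (x*y),
      mul_nonneg (neg_nonneg.2 h) (add_nonneg (sq_nonneg x) (sq_nonneg y)),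
      sq_nonneg (y^2), sq_nonneg (x^2+y^2+2*x*y)]

lemma main2 (k₁ u v : ℝ) (hk₁ : 0 < k₁) :
    (5/2) * (k₁/(4*k₁+4)) ^ 3 *
        ((2/3) * ((4*k₁+4)/k₁) ^ 3 * ((3/2) * (k₁/(4*k₁+4)) ^ 2) * (u*|u|) + v*|v|) * (v*|v|)
      - (5/2) * (4*k₁+4) * ((k₁/(4*k₁+4)) ^ 3 * u^3 + v^3) * ((k₁/(4*k₁+4)) * u + v)
    ≤ -((k₁/(4*k₁+4)) ^ 4 / 16) * (u^4 + v^4) := by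
  have hk4 : (0:ℝ) < 4*k₁+4 := by linarith
  set r : ℝ := k₁/(4*k₁+4) with hr_def
  have hr0 : 0 < r := div_pos hk₁ hk4
  have hr14 : r ≤ 1/4 := by
    rw [hr_def, div_le_iff₀ hk4]; linarith
  have hρ : r^3 ≤ 1/64 := by
    calc r^3 ≤ (1/4)^3 := pow_le_pow_left₀ hr0.le hr14 3
      _ = 1/64 := by norm_num
  have hc := core (r^3) (4*k₁+4) (r*u) v hρ (by linarith)
  rw [show |r*u| = r*|u| by rw [abs_mul, abs_of_pos hr0]] at hc
  rw [show v^4 = v^2*|v|^2 from by rw [sq_abs]; ring] at hc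
  have key : (5/2) * r ^ 3 *
        ((2/3) * ((4*k₁+4)/k₁) ^ 3 * ((3/2) * r ^ 2) * (u*|u|) + v*|v|) * (v*|v|)
      - (5/2) * (4*k₁+4) * (r ^ 3 * u^3 + v^3) * (r * u + v)
      = (5/2) * ((r*u*(r*|u|))*(v*|v|) + r^3*((v*|v|)^2)
          - (4*k₁+4)*(((r*u)^3+v^3)*((r*u)+v))) := by
    rw [hr_def]
    field_simp
  rw [key]
  have hr4 : r^4 ≤ 1 := by nlinarith
  have hu4 : (0:ℝ) ≤ u^4 := by positivity
  have hv4 : (0:ℝ) ≤ v^4 := by positivity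
  have hvv : (v*|v|)^2 = v^2*|v|^2 := by ring
  rw [hvv]
  have hab : v^2*|v|^2 = v^4 := by rw [sq_abs]; ring
  nlinarith [hc, mul_nonneg (pow_nonneg hr0.le 4) hu4,
    mul_nonneg (sub_nonneg.2 hr4) hv4, sq_abs v, hab]

/-- Negative definiteness of `W₁`: for every `k₁ > 0` there are `k₂ > 0`,
`γ₁ > (3/2)(k₁/k₂)⁵` and `c > 0` with `W₁(ξ₁,x₂) ≤ −c(|ξ₁|^{4/3} + |x₂|²)`. -/
theorem W₁_negdef (k₁ : ℝ) (hk₁ : 0 < k₁) :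
    ∃ k₂ > (0 : ℝ), ∃ γ₁ > (3/2) * (k₁/k₂) ^ 5, ∃ c > (0 : ℝ),
      ∀ ξ₁ x₂ : ℝ,
        (5/2) * (k₁/k₂) ^ 3 * ((2/3) * (k₂/k₁) ^ 3 * γ₁ * spow ξ₁ (2/3) + x₂) * x₂
          - (5/2) * k₂ * ((k₁/k₂) ^ 3 * ξ₁ + spow x₂ (3/2))
            * ((k₁/k₂) * spow ξ₁ (1/3) + spow x₂ (1/2))
        ≤ -c * (|ξ₁| ^ ((4 : ℝ)/3) + |x₂| ^ 2) := by
  have hk4 : (0:ℝ) < 4*k₁+4 := by linarith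
  have hr0 : 0 < k₁/(4*k₁+4) := div_pos hk₁ hk4
  have hr14 : k₁/(4*k₁+4) ≤ 1/4 := by rw [div_le_iff₀ hk4]; linarith
  have hρ : (k₁/(4*k₁+4))^3 ≤ 1/64 := by
    calc (k₁/(4*k₁+4))^3 ≤ (1/4)^3 := pow_le_pow_left₀ hr0.le hr14 3
      _ = 1/64 := by norm_num
  refine ⟨4*k₁+4, hk4, (3/2) * (k₁/(4*k₁+4)) ^ 2,
    by nlinarith [pow_pos hr0 2,
      mul_le_mul_of_nonneg_left hρ (by positivity : (0:ℝ) ≤ (k₁/(4*k₁+4))^2)],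
    (k₁/(4*k₁+4)) ^ 4 / 16, by positivity, ?_⟩
  intro ξ₁ x₂
  obtain ⟨u, e13, exi, e23, e43⟩ :
      ∃ u, spow ξ₁ (1/3) = u ∧ ξ₁ = u^3 ∧ spow ξ₁ (2/3) = u*|u| ∧
        |ξ₁| ^ ((4:ℝ)/3) = u^4 :=
    ⟨spow ξ₁ (1/3), rfl, (spow_third_cube ξ₁).symm, spow_two_thirds ξ₁,
      spow_third_fourth ξ₁⟩
  obtain ⟨v, e12, ex2, e32, esq⟩ :
      ∃ v, spow x₂ (1/2) = v ∧ x₂ = v*|v| ∧ spow x₂ (3/2) = v^3 ∧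
        |x₂| ^ 2 = v^4 :=
    ⟨spow x₂ (1/2), rfl, (spow_half_mul_abs x₂).symm, (spow_half_cube x₂).symm,
      spow_half_fourth x₂⟩
  rw [e23, e32, e13, e12, e43, esq, exi, ex2]
  have h := main2 k₁ u v hk₁
  calc (5/2) * (k₁/(4*k₁+4)) ^ 3 *
        ((2/3) * ((4*k₁+4)/k₁) ^ 3 * ((3/2) * (k₁/(4*k₁+4)) ^ 2) * (u*|u|) + v*|v|) * (v*|v|)
      - (5/2) * (4*k₁+4) * ((k₁/(4*k₁+4)) ^ 3 * u^3 + v^3) * ((k₁/(4*k₁+4)) * u + v)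
      ≤ -((k₁/(4*k₁+4)) ^ 4 / 16) * (u^4 + v^4) := h
    _ = -((k₁/(4*k₁+4)) ^ 4 / 16) * (u^4 + v^4) := rfl
end

section
/- For all l₁ > 0 and l₂ > 0 there exist γ₂ > 0 and c > 0 such that for all (e₁, e₂) ∈ ℝ²: −(5/3)·l₁·⌈e₁ − l₁^{−3/2}⌈e₂⌋^{3/2}⌋^{2/3}·(⌈e₁⌋^{2/3} − e₂/l₁) − (5/2)·l₂·γ₂·⌈e₁⌋^{1/3}·⌈e₂⌋^{3/2} ≤ −c·(|e₁|^{4/3} + |e₂|²). -/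
namespace ObserverAux

lemma spow_zero (p : ℝ) : spow 0 p = 0 := by simp [spow]

lemma spow_neg (z p : ℝ) : spow (-z) p = -spow z p := by
  simp [spow, abs_neg, Real.sign_neg, mul_neg]

lemma spow_of_pos {z : ℝ} (hz : 0 < z) (p : ℝ) : spow z p = z ^ p := by
  simp [spow, abs_of_pos hz, Real.sign_of_pos hz]

lemma rpow_pow (x : ℝ) (hx : 0 ≤ x) (p : ℝ) (n : ℕ) : (x ^ p) ^ n = x ^ (p * n) := by
  rw [← Real.rpow_natCast (x ^ p) n, ← Real.rpow_mul hx]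

/-- cube of the signed cube root -/
lemma S1 (x : ℝ) : (spow x (1/3)) ^ 3 = x := by
  rcases lt_trichotomy x 0 with h | h | h
  · have hx : 0 < -x := by linarith
    have : spow x (1/3) = -spow (-x) (1/3) := by rw [← spow_neg, neg_neg]
    rw [this, spow_of_pos hx, neg_pow, rpow_pow _ hx.le]
    norm_num
  · simp [h, spow_zero]
  · rw [spow_of_pos h, rpow_pow _ h.le]
    norm_num
lemma S2 (x : ℝ) : spow x (2/3) = |spow x (1/3)| * spow x (1/3) := by
  rcases lt_trichotomy x 0 with h | h | h
  · have hx : 0 < -x := by linarith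
    have h1 : spow x (1/3) = -spow (-x) (1/3) := by rw [← spow_neg, neg_neg]
    have h2 : spow x (2/3) = -spow (-x) (2/3) := by rw [← spow_neg, neg_neg]
    rw [h1, h2, spow_of_pos hx, spow_of_pos hx, abs_neg,
      abs_of_nonneg (Real.rpow_nonneg hx.le _), mul_neg, ← Real.rpow_add hx]
    norm_num
  · simp [h, spow_zero]
  · rw [spow_of_pos h, spow_of_pos h, abs_of_nonneg (Real.rpow_nonneg h.le _),
      ← Real.rpow_add h]
    norm_num
lemma S3 (x : ℝ) : |x| ^ ((4:ℝ)/3) = (spow x (1/3)) ^ 4 := by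
  rcases lt_trichotomy x 0 with h | h | h
  · have hx : 0 < -x := by linarith
    have h1 : spow x (1/3) = -spow (-x) (1/3) := by rw [← spow_neg, neg_neg]
    rw [h1, neg_pow, spow_of_pos hx, rpow_pow _ hx.le, abs_of_neg h]
    norm_num
  · simp [h, spow_zero, Real.zero_rpow (by norm_num : ((4:ℝ)/3) ≠ 0)]
  · rw [spow_of_pos h, rpow_pow _ h.le, abs_of_pos h]
    norm_num
lemma S4 (x : ℝ) : |spow x (1/2)| * spow x (1/2) = x := by
  rcases lt_trichotomy x 0 with h | h | h
  · have hx : 0 < -x := by linarith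
    have h1 : spow x (1/2) = -spow (-x) (1/2) := by rw [← spow_neg, neg_neg]
    rw [h1, spow_of_pos hx, abs_neg, abs_of_nonneg (Real.rpow_nonneg hx.le _),
      mul_neg, ← Real.rpow_add hx]
    norm_num
  · simp [h, spow_zero]
  · rw [spow_of_pos h, abs_of_nonneg (Real.rpow_nonneg h.le _), ← Real.rpow_add h]
    norm_num
lemma S5 (x : ℝ) : spow x (3/2) = (spow x (1/2)) ^ 3 := by
  rcases lt_trichotomy x 0 with h | h | h
  · have hx : 0 < -x := by linarith
    have h1 : spow x (1/2) = -spow (-x) (1/2) := by rw [← spow_neg, neg_neg]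
    have h2 : spow x (3/2) = -spow (-x) (3/2) := by rw [← spow_neg, neg_neg]
    rw [h1, h2, spow_of_pos hx, spow_of_pos hx, neg_pow, rpow_pow _ hx.le]
    norm_num
  · simp [h, spow_zero]
  · rw [spow_of_pos h, spow_of_pos h, rpow_pow _ h.le]
    norm_num
lemma S6 (x : ℝ) : |x| ^ 2 = (spow x (1/2)) ^ 4 := by
  rcases lt_trichotomy x 0 with h | h | h
  · have hx : 0 < -x := by linarith
    have h1 : spow x (1/2) = -spow (-x) (1/2) := by rw [← spow_neg, neg_neg]
    rw [h1, neg_pow, spow_of_pos hx, rpow_pow _ hx.le, abs_of_neg h]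
    norm_num
  · simp [h, spow_zero]
  · rw [spow_of_pos h, rpow_pow _ h.le, abs_of_pos h]
    norm_num

lemma sign_mul_of_pos {c : ℝ} (hc : 0 < c) (x : ℝ) : Real.sign (c * x) = Real.sign x := by
  rcases lt_trichotomy x 0 with h | h | h
  · rw [Real.sign_of_neg h, Real.sign_of_neg (mul_neg_of_pos_of_neg hc h)]
  · simp [h]
  · rw [Real.sign_of_pos h, Real.sign_of_pos (mul_pos hc h)]

lemma S7 {c : ℝ} (hc : 0 < c) (x p : ℝ) : spow (c * x) p = c ^ p * spow x p := by
  unfold spow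
  rw [abs_mul, abs_of_pos hc, Real.mul_rpow hc.le (abs_nonneg x), sign_mul_of_pos hc]
  ring

/-- strict monotonicity of `x ↦ |x|x` -/
lemma absmul_lt {a b : ℝ} (h : a < b) : |a| * a < |b| * b := by
  rcases le_or_gt 0 a with ha | ha
  · rw [abs_of_nonneg ha, abs_of_pos (lt_of_le_of_lt ha h)]; nlinarith
  · rcases le_or_gt 0 b with hb | hb
    · rw [abs_of_neg ha, abs_of_nonneg hb]; nlinarith
    · rw [abs_of_neg ha, abs_of_neg hb]; nlinarith

lemma cube_lt {a b : ℝ} (h : a < b) : a ^ 3 < b ^ 3 :=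
  (by decide : Odd 3).strictMono_pow h

/-- key polynomial estimate, same-sign branch -/
lemma E1 (P Q : ℝ) (hQ : 0 ≤ Q) : (P^2 - Q^2)^3 ≤ 8*(P^3 - Q^3)^2 := by
  nlinarith [sq_nonneg (P-Q), sq_nonneg (P+Q), mul_nonneg hQ hQ,
    mul_nonneg (mul_nonneg hQ hQ) hQ, sq_nonneg (P*Q), sq_nonneg (P^2 - Q^2),
    mul_nonneg (mul_nonneg hQ hQ) (sq_nonneg (P-Q))]

/-- key polynomial estimate, mixed-sign branch -/
lemma E2 (P q : ℝ) (hP : 0 ≤ P) (hq : 0 ≤ q) : (P^2 + q^2)^3 ≤ 8*(P^3 + q^3)^2 := by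
  nlinarith [sq_nonneg (P^3 - P*q^2), sq_nonneg (P^2*q - q^3),
    mul_nonneg (mul_nonneg (mul_nonneg hP hP) hP) (mul_nonneg (mul_nonneg hq hq) hq),
    pow_nonneg hP 6, pow_nonneg hq 6]

/-- unified: `(|P|P − |Q|Q)³ ≤ 8 (P³−Q³)²` -/
lemma lemE (P Q : ℝ) : (|P| * P - |Q| * Q)^3 ≤ 8*(P^3 - Q^3)^2 := by
  rcases le_or_gt 0 Q with hQ | hQ
  · rcases le_or_gt 0 P with hP | hP
    · rw [abs_of_nonneg hP, abs_of_nonneg hQ]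
      have := E1 P Q hQ
      nlinarith [this]
    · -- P < 0 ≤ Q : LHS = (-P² - Q²)³ ≤ 0 ≤ RHS
      rw [abs_of_neg hP, abs_of_nonneg hQ]
      have h1 : -P * P - Q * Q ≤ 0 := by nlinarith
      have h2 : (-P * P - Q * Q)^3 ≤ 0 := Odd.pow_nonpos (by decide) h1
      nlinarith [sq_nonneg (P^3 - Q^3), h2]
  · rcases le_or_gt 0 P with hP | hP
    · rw [abs_of_nonneg hP, abs_of_neg hQ]
      have := E2 P (-Q) hP (by linarith)
      nlinarith [this]
    · rw [abs_of_neg hP, abs_of_neg hQ]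
      have := E1 (-Q) (-P) (by linarith)
      nlinarith [this]

/-- Lemma C: `(1/2) D₂² ≤ spow D₁ (2/3) · D₂` where `D₁ = P³−Q³`, `D₂ = |P|P−|Q|Q`. -/
lemma lemC (P Q : ℝ) :
    (1/2) * (|P| * P - |Q| * Q)^2 ≤ spow (P^3 - Q^3) (2/3) * (|P| * P - |Q| * Q) := by
  rcases lt_trichotomy P Q with h | h | h
  · -- P < Q : use symmetry
    have hD1 : P^3 - Q^3 < 0 := by have := cube_lt h; linarith
    have hD2 : |P| * P - |Q| * Q < 0 := by have := absmul_lt h; linarith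
    have hD1' : (0:ℝ) < Q^3 - P^3 := by linarith
    have hD2' : (0:ℝ) < |Q| * Q - |P| * P := by linarith
    have hs : spow (P^3 - Q^3) (2/3) = -spow (Q^3 - P^3) (2/3) := by
      rw [← spow_neg]; ring_nf
    rw [hs, spow_of_pos hD1']
    have hle : (1/2) * (|Q| * Q - |P| * P) ≤ (Q^3 - P^3) ^ ((2:ℝ)/3) := by
      apply le_of_pow_le_pow_left₀ (n := 3) (by norm_num)
        (Real.rpow_nonneg hD1'.le _)
      rw [rpow_pow _ hD1'.le, show (2:ℝ)/3 * ((3:ℕ):ℝ) = ((2:ℕ):ℝ) by norm_num,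
        Real.rpow_natCast]
      nlinarith [lemE Q P]
    calc (1/2) * (|P| * P - |Q| * Q)^2 = ((1/2) * (|Q| * Q - |P| * P)) * (|Q| * Q - |P| * P) := by ring
      _ ≤ (Q^3 - P^3) ^ ((2:ℝ)/3) * (|Q| * Q - |P| * P) :=
          mul_le_mul_of_nonneg_right hle hD2'.le
      _ = -(Q^3 - P^3) ^ ((2:ℝ)/3) * (|P| * P - |Q| * Q) := by ring
  · simp [h, spow_zero]
  · have hD1 : (0:ℝ) < P^3 - Q^3 := by have := cube_lt h; linarith
    have hD2 : (0:ℝ) < |P| * P - |Q| * Q := by have := absmul_lt h; linarith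
    rw [spow_of_pos hD1]
    have hle : (1/2) * (|P| * P - |Q| * Q) ≤ (P^3 - Q^3) ^ ((2:ℝ)/3) := by
      apply le_of_pow_le_pow_left₀ (n := 3) (by norm_num)
        (Real.rpow_nonneg hD1.le _)
      rw [rpow_pow _ hD1.le, show (2:ℝ)/3 * ((3:ℕ):ℝ) = ((2:ℕ):ℝ) by norm_num,
        Real.rpow_natCast]
      nlinarith [lemE P Q]
    calc (1/2) * (|P| * P - |Q| * Q)^2 = ((1/2) * (|P| * P - |Q| * Q)) * (|P| * P - |Q| * Q) := by ring
      _ ≤ (P^3 - Q^3) ^ ((2:ℝ)/3) * (|P| * P - |Q| * Q) :=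
          mul_le_mul_of_nonneg_right hle hD2.le

/-- Lemma D: `(1/4)(P⁴+Q⁴) ≤ (|P|P−|Q|Q)² + PQ³`. -/
lemma lemD (P Q : ℝ) : (1/4)*(P^4 + Q^4) ≤ (|P| * P - |Q| * Q)^2 + P*Q^3 := by
  have Dpos : ∀ p q : ℝ, 0 ≤ p → 0 ≤ q → (1/4)*(p^4+q^4) ≤ (p^2-q^2)^2 + p*q^3 := by
    intro p q hp hq
    nlinarith [sq_nonneg (p^2 - 2*p*q), sq_nonneg (p*q - q^2), sq_nonneg (p^2-q^2),
      sq_nonneg (p-q), mul_nonneg hp (mul_nonneg (mul_nonneg hq hq) hq),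
      mul_nonneg (mul_nonneg hp hp) (sq_nonneg (p-q)),
      mul_nonneg (mul_nonneg hq hq) (sq_nonneg (p-q)),
      mul_nonneg (mul_nonneg hp hq) (sq_nonneg (p-q))]
  have Dmix : ∀ p q : ℝ, 0 ≤ p → (1/4)*(p^4+q^4) ≤ (p^2+q^2)^2 + p*q^3 := by
    intro p q hp
    nlinarith [sq_nonneg (p*q + q^2/2), sq_nonneg (p*q - q^2/2), sq_nonneg (p^2+q^2),
      pow_nonneg hp 4, sq_nonneg (p*q), sq_nonneg q, sq_nonneg p,
      mul_nonneg (mul_nonneg hp hp) (sq_nonneg q)]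
  rcases le_or_gt 0 P with hP | hP <;> rcases le_or_gt 0 Q with hQ | hQ
  · rw [abs_of_nonneg hP, abs_of_nonneg hQ]
    have := Dpos P Q hP hQ; nlinarith [this]
  · rw [abs_of_nonneg hP, abs_of_neg hQ]
    have := Dmix P Q hP; nlinarith [this]
  · rw [abs_of_neg hP, abs_of_nonneg hQ]
    have := Dmix (-P) (-Q) (by linarith); nlinarith [this]
  · rw [abs_of_neg hP, abs_of_neg hQ]
    have := Dpos (-P) (-Q) (by linarith) (by linarith); nlinarith [this]

lemma final_combine (l₁ c S P Q : ℝ) (hl₁ : 0 < l₁)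
    (hS : (1/2) * (|P| * P - |Q| * Q)^2 ≤ S * (|P| * P - |Q| * Q))
    (hD : (1/4)*(P^4 + Q^4) ≤ (|P| * P - |Q| * Q)^2 + P*Q^3)
    (hc1 : c ≤ (5/24)*l₁) (hc2 : c*l₁^2 ≤ (5/24)*l₁) :
    -(5/3)*l₁*S*(|P| * P - |Q| * Q) - (5/6)*l₁*(P*Q^3) ≤ -c*(P^4 + l₁^2*Q^4) := by
  have h53 : (0:ℝ) ≤ (5/3) * l₁ := by positivity
  have h56 : (0:ℝ) ≤ (5/6) * l₁ := by positivity
  have hD2 := mul_le_mul_of_nonneg_left hS h53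
  have hDm := mul_le_mul_of_nonneg_left hD h56
  have t1 : c * P^4 ≤ (5/24)*l₁*P^4 :=
    mul_le_mul_of_nonneg_right hc1 (by positivity)
  have t2 : c*l₁^2*Q^4 ≤ (5/24)*l₁*Q^4 :=
    mul_le_mul_of_nonneg_right hc2 (by positivity)
  nlinarith [hD2, hDm, t1, t2]

end ObserverAux

open ObserverAux in
/-- Negative definiteness of the observer Lyapunov derivative: for all `l₁, l₂ > 0` there
are `γ₂ > 0` and `c > 0` with `V̇₂(e₁,e₂) ≤ −c(|e₁|^{4/3} + |e₂|²)`. -/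
theorem observer_lyapunov_negdef (l₁ l₂ : ℝ) (hl₁ : 0 < l₁) (hl₂ : 0 < l₂) :
    ∃ γ₂ > (0 : ℝ), ∃ c > (0 : ℝ), ∀ e₁ e₂ : ℝ,
      -(5/3) * l₁ * spow (e₁ - l₁ ^ (-(3 : ℝ)/2) * spow e₂ (3/2)) (2/3)
          * (spow e₁ (2/3) - e₂ / l₁)
        - (5/2) * l₂ * γ₂ * spow e₁ (1/3) * spow e₂ (3/2)
      ≤ -c * (|e₁| ^ ((4 : ℝ)/3) + |e₂| ^ 2) := by
  refine ⟨l₁ ^ (-(1:ℝ)/2) / (3 * l₂), by positivity,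
    (5/24) * min l₁ l₁⁻¹, by positivity, fun e₁ e₂ => ?_⟩
  obtain ⟨P, hP⟩ : ∃ p : ℝ, p = spow e₁ (1/3) := ⟨_, rfl⟩
  obtain ⟨Q, hQ⟩ : ∃ q : ℝ, q = spow (e₂ / l₁) (1/2) := ⟨_, rfl⟩
  have he₂ : e₂ = l₁ * (e₂ / l₁) := by field_simp
  -- substitution identities
  have h32 : spow e₂ (3/2) = l₁ ^ ((3:ℝ)/2) * Q ^ 3 := by
    rw [hQ, ← S5]
    nth_rewrite 1 [he₂]
    rw [S7 hl₁]
  have h1 : e₁ - l₁ ^ (-(3 : ℝ)/2) * spow e₂ (3/2) = P ^ 3 - Q ^ 3 := by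
    rw [h32, hP, S1]
    have hrw : l₁ ^ (-(3:ℝ)/2) * (l₁ ^ ((3:ℝ)/2) * Q ^ 3) =
        (l₁ ^ (-(3:ℝ)/2) * l₁ ^ ((3:ℝ)/2)) * Q ^ 3 := by ring
    rw [hrw, ← Real.rpow_add hl₁]
    norm_num
  have h2 : spow e₁ (2/3) - e₂ / l₁ = |P| * P - |Q| * Q := by
    rw [S2 e₁, ← hP]
    have h4' := S4 (e₂ / l₁)
    rw [← hQ] at h4'
    rw [← h4']
  have h4 : |e₁| ^ ((4:ℝ)/3) = P ^ 4 := by rw [S3, hP]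
  have h5 : |e₂| ^ 2 = l₁ ^ 2 * Q ^ 4 := by
    have habs : l₁ * |e₂ / l₁| = |e₂| := by
      rw [abs_div, abs_of_pos hl₁]
      field_simp
    rw [← habs, mul_pow, S6 (e₂ / l₁), ← hQ]
  -- coefficient identity
  have hcoef : (5/2) * l₂ * (l₁ ^ (-(1:ℝ)/2) / (3 * l₂)) * l₁ ^ ((3:ℝ)/2)
      = (5/6) * l₁ := by
    have hrw : (5/2) * l₂ * (l₁ ^ (-(1:ℝ)/2) / (3 * l₂)) * l₁ ^ ((3:ℝ)/2)
        = (5/6) * (l₁ ^ (-(1:ℝ)/2) * l₁ ^ ((3:ℝ)/2)) := by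
      field_simp; ring
    rw [hrw, ← Real.rpow_add hl₁]
    norm_num
  -- constant bounds
  have hc1 : (5/24) * min l₁ l₁⁻¹ ≤ (5/24) * l₁ := by
    have := min_le_left l₁ l₁⁻¹; linarith
  have hc2 : ((5/24) * min l₁ l₁⁻¹) * l₁ ^ 2 ≤ (5/24) * l₁ := by
    have h := min_le_right l₁ l₁⁻¹
    have h2 : min l₁ l₁⁻¹ * l₁ ^ 2 ≤ l₁⁻¹ * l₁ ^ 2 :=
      mul_le_mul_of_nonneg_right h (by positivity)
    have hinv : l₁⁻¹ * l₁ ^ 2 = l₁ := by field_simp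
    nlinarith [h2]
  -- main estimates
  have hC := lemC P Q
  have hD := lemD P Q
  have fc := final_combine l₁ ((5/24) * min l₁ l₁⁻¹) (spow (P ^ 3 - Q ^ 3) (2/3))
    P Q hl₁ hC hD hc1 hc2
  rw [h1, h2, h4, h5, h32, ← hP]
  have e2 : (5/2) * l₂ * (l₁ ^ (-(1:ℝ)/2) / (3 * l₂)) * P * (l₁ ^ ((3:ℝ)/2) * Q ^ 3)
      = (5/6) * l₁ * (P * Q ^ 3) := by
    rw [show (5/2) * l₂ * (l₁ ^ (-(1:ℝ)/2) / (3 * l₂)) * P * (l₁ ^ ((3:ℝ)/2) * Q ^ 3)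
      = ((5/2) * l₂ * (l₁ ^ (-(1:ℝ)/2) / (3 * l₂)) * l₁ ^ ((3:ℝ)/2)) * (P * Q ^ 3) from by
        ring, hcoef]
  linarith [fc, e2]
end

section
/- Let k₁ > 0 and k₂ > 0. There exists γ₁⁰ > 0 such that for all γ₁ ≥ γ₁⁰ the function V₁(x₁, x₂) = γ₁|x₁|^{5/3} + (5/2)(k₁/k₂)³·x₁·x₂ + |x₂|^{5/2} is positive definite on ℝ², i.e., V₁(0,0) = 0 and V₁(x₁, x₂) > 0 for every (x₁, x₂) ≠ (0,0). -/
/-- Positive definiteness of `V₁(x₁,x₂) = γ₁|x₁|^{5/3} + (5/2)(k₁/k₂)³x₁x₂ + |x₂|^{5/2}`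
for `γ₁` sufficiently large. -/
theorem V₁_posdef (k₁ k₂ : ℝ) (hk₁ : 0 < k₁) (hk₂ : 0 < k₂) :
    ∃ γ₁0 > (0 : ℝ), ∀ γ₁ ≥ γ₁0,
      (γ₁ * |(0 : ℝ)| ^ ((5 : ℝ)/3) + (5/2) * (k₁/k₂) ^ 3 * 0 * 0
        + |(0 : ℝ)| ^ ((5 : ℝ)/2) = 0) ∧
      ∀ x₁ x₂ : ℝ, (x₁, x₂) ≠ (0, 0) →
        0 < γ₁ * |x₁| ^ ((5 : ℝ)/3) + (5/2) * (k₁/k₂) ^ 3 * x₁ * x₂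
            + |x₂| ^ ((5 : ℝ)/2) := by
  set c : ℝ := (5/2) * (k₁/k₂) ^ 3 with hc
  have hcpos : 0 < c := by positivity
  set l : ℝ := c * (2 : ℝ) ^ ((2 : ℝ)/5) with hl
  have hlpos : 0 < l := by positivity
  refine ⟨l ^ ((5 : ℝ)/3) + 1, by positivity, fun γ₁ hγ ↦ ⟨by simp, fun x₁ x₂ hx ↦ ?_⟩⟩
  have hpq : ((5:ℝ)/3).HolderConjugate ((5:ℝ)/2) := by
    constructor <;> norm_num
  -- Young's inequality on the cross term
  have hyoung := Real.young_inequality (-(l * x₁)) ((c / l) * x₂) hpq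
  have hab : (-(l * x₁)) * ((c / l) * x₂) = -(c * x₁ * x₂) := by
    field_simp
  rw [hab] at hyoung
  have h1 : |(-(l * x₁))| ^ ((5:ℝ)/3) = l ^ ((5:ℝ)/3) * |x₁| ^ ((5:ℝ)/3) := by
    rw [abs_neg, abs_mul, abs_of_pos hlpos, Real.mul_rpow hlpos.le (abs_nonneg _)]
  have h2 : |(c / l) * x₂| ^ ((5:ℝ)/2) = (1/2) * |x₂| ^ ((5:ℝ)/2) := by
    have hcl : c / l = (2 : ℝ) ^ (-((2 : ℝ)/5)) := by
      rw [hl, Real.rpow_neg (by norm_num)]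
      rw [div_eq_iff (by positivity)]
      have h20 : ((2:ℝ) ^ ((2:ℝ)/5)) ≠ 0 := by positivity
      field_simp
    rw [abs_mul, Real.mul_rpow (abs_nonneg _) (abs_nonneg _),
      abs_of_pos (by rw [hcl]; positivity : (0:ℝ) < c / l), hcl,
      ← Real.rpow_mul (by norm_num)]
    rw [show (-((2:ℝ)/5) * (5/2)) = -1 by norm_num, Real.rpow_neg_one]
    norm_num
  rw [h1, h2] at hyoung
  -- so  -(c x₁ x₂) ≤ (3/5) l^{5/3} |x₁|^{5/3} + (2/5)(1/2)|x₂|^{5/2}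
  have hcross : -(c * x₁ * x₂) ≤ l ^ ((5:ℝ)/3) * |x₁| ^ ((5:ℝ)/3)
      + (1/2) * |x₂| ^ ((5:ℝ)/2) := by
    refine hyoung.trans ?_
    have t1 : l ^ ((5:ℝ)/3) * |x₁| ^ ((5:ℝ)/3) / (5/3)
        ≤ l ^ ((5:ℝ)/3) * |x₁| ^ ((5:ℝ)/3) := by
      rw [div_le_iff₀ (by norm_num)]
      nlinarith [Real.rpow_nonneg hlpos.le ((5:ℝ)/3),
        Real.rpow_nonneg (abs_nonneg x₁) ((5:ℝ)/3),
        mul_nonneg (Real.rpow_nonneg hlpos.le ((5:ℝ)/3))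
          (Real.rpow_nonneg (abs_nonneg x₁) ((5:ℝ)/3))]
    have t2 : (1/2) * |x₂| ^ ((5:ℝ)/2) / (5/2) ≤ (1/2) * |x₂| ^ ((5:ℝ)/2) := by
      rw [div_le_iff₀ (by norm_num)]
      nlinarith [Real.rpow_nonneg (abs_nonneg x₂) ((5:ℝ)/2)]
    linarith
  have hx1 : 0 ≤ |x₁| ^ ((5:ℝ)/3) := Real.rpow_nonneg (abs_nonneg _) _
  have hx2 : 0 ≤ |x₂| ^ ((5:ℝ)/2) := Real.rpow_nonneg (abs_nonneg _) _
  have hpos : 0 < |x₁| ^ ((5:ℝ)/3) + (1/2) * |x₂| ^ ((5:ℝ)/2) := by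
    rcases (by simpa [Prod.ext_iff] using hx : ¬(x₁ = 0 ∧ x₂ = 0)) with h
    by_cases h1 : x₁ = 0
    · have h2 : x₂ ≠ 0 := fun h2 ↦ h ⟨h1, h2⟩
      have : 0 < |x₂| ^ ((5:ℝ)/2) := Real.rpow_pos_of_pos (abs_pos.mpr h2) _
      linarith
    · have : 0 < |x₁| ^ ((5:ℝ)/3) := Real.rpow_pos_of_pos (abs_pos.mpr h1) _
      linarith
  nlinarith [mul_le_mul_of_nonneg_right (le_trans (by linarith : l ^ ((5:ℝ)/3) + 1 ≤ γ₁) (le_refl γ₁)) hx1]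
end

section
/- Let k₁ > 0, k₂ > 0, γ₁ > 0, and suppose x₁ = −(k₂/k₁)³⌈x₂⌋^{3/2}. Then (5/3)·γ₁·⌈x₁⌋^{2/3}·x₂ + (5/2)·(k₁/k₂)³·x₂² = −((5/3)(k₂/k₁)²γ₁ − (5/2)(k₁/k₂)³)·x₂², which is strictly negative for every x₂ ≠ 0 if and only if γ₁ > (3/2)(k₁/k₂)⁵. -/
lemma key (c : ℝ) (hc : 0 < c) (x : ℝ) :
    spow (-c ^ 3 * spow x (3/2)) (2/3) = -(c ^ 2) * x := by
  rcases lt_trichotomy x 0 with hx | rfl | hx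
  · have h1 : spow x (3/2) = -((-x) ^ ((3:ℝ)/2)) := by
      unfold spow
      rw [Real.sign_of_neg hx, abs_of_neg hx]; ring
    rw [h1]
    have hx' : (0:ℝ) < -x := by linarith
    have hpos : (0:ℝ) < c ^ 3 * (-x) ^ ((3:ℝ)/2) :=
      mul_pos (pow_pos hc 3) (Real.rpow_pos_of_pos hx' _)
    unfold spow
    rw [show -c ^ 3 * -((-x) ^ ((3:ℝ)/2)) = c ^ 3 * (-x) ^ ((3:ℝ)/2) by ring,
        Real.sign_of_pos hpos, abs_of_pos hpos, mul_one,
        Real.mul_rpow (by positivity) (Real.rpow_pos_of_pos hx' _).le, ← Real.rpow_natCast c 3,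
        ← Real.rpow_mul hc.le, ← Real.rpow_mul hx'.le]
    norm_num
  · simp [spow]
  · have h1 : spow x (3/2) = x ^ ((3:ℝ)/2) := by
      unfold spow
      rw [Real.sign_of_pos hx, abs_of_pos hx, mul_one]
    rw [h1]
    have hpos : (0:ℝ) < c ^ 3 * x ^ ((3:ℝ)/2) := by positivity
    have hneg : -c ^ 3 * x ^ ((3:ℝ)/2) < 0 := by linarith
    unfold spow
    rw [Real.sign_of_neg hneg, abs_of_neg hneg,
        show -(-c ^ 3 * x ^ ((3:ℝ)/2)) = c ^ 3 * x ^ ((3:ℝ)/2) by ring,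
        Real.mul_rpow (by positivity) (by positivity), ← Real.rpow_natCast c 3,
        ← Real.rpow_mul hc.le, ← Real.rpow_mul hx.le]
    norm_num

/-- Evaluation of the first summand of `V̇₁` on the set `{x₁ = −(k₂/k₁)³⌈x₂⌋^{3/2}}`, and
the criterion `γ₁ > (3/2)(k₁/k₂)⁵` for strict negativity there. -/
theorem V₁dot_on_vanishing_set (k₁ k₂ γ₁ : ℝ) (hk₁ : 0 < k₁) (hk₂ : 0 < k₂)
    (hγ₁ : 0 < γ₁) :
    (∀ x₂ : ℝ,
      (5/3) * γ₁ * spow (-(k₂/k₁) ^ 3 * spow x₂ (3/2)) (2/3) * x₂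
          + (5/2) * (k₁/k₂) ^ 3 * x₂ ^ 2
        = -((5/3) * (k₂/k₁) ^ 2 * γ₁ - (5/2) * (k₁/k₂) ^ 3) * x₂ ^ 2) ∧
    ((∀ x₂ : ℝ, x₂ ≠ 0 →
        (5/3) * γ₁ * spow (-(k₂/k₁) ^ 3 * spow x₂ (3/2)) (2/3) * x₂
            + (5/2) * (k₁/k₂) ^ 3 * x₂ ^ 2 < 0) ↔
      γ₁ > (3/2) * (k₁/k₂) ^ 5) := by
  have hc : (0:ℝ) < k₂ / k₁ := div_pos hk₂ hk₁
  have hd : (0:ℝ) < k₁ / k₂ := div_pos hk₁ hk₂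
  have hcd : (k₂ / k₁) * (k₁ / k₂) = 1 := by field_simp
  have hk : ∀ x₂ : ℝ, spow (-(k₂/k₁) ^ 3 * spow x₂ (3/2)) (2/3) = -((k₂/k₁) ^ 2) * x₂ :=
    key _ hc
  have hcc : (k₂/k₁) ^ 2 * (k₁/k₂) ^ 2 = 1 := by
    rw [← mul_pow, hcd, one_pow]
  have key2 : (k₂/k₁) ^ 2 * (k₁/k₂) ^ 2 * γ₁ = γ₁ := by rw [hcc, one_mul]
  have key3 : (k₂/k₁) ^ 2 * (k₁/k₂) ^ 5 = (k₁/k₂) ^ 3 := by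
    have : (k₂/k₁) ^ 2 * (k₁/k₂) ^ 5 = ((k₂/k₁) ^ 2 * (k₁/k₂) ^ 2) * (k₁/k₂) ^ 3 := by ring
    rw [this, hcc, one_mul]
  have hA : ((5:ℝ)/3) * (k₂/k₁) ^ 2 * γ₁ - (5/2) * (k₁/k₂) ^ 3 > 0 ↔
      γ₁ > (3/2) * (k₁/k₂) ^ 5 := by
    constructor <;> intro h
    · nlinarith [mul_pos (pow_pos hd 2) h, key2]
    · nlinarith [mul_pos (pow_pos hc 2) (sub_pos.mpr h), key3]
  refine ⟨fun x₂ => by rw [hk]; ring, ?_⟩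
  constructor
  · intro h
    have h1 := h 1 one_ne_zero
    rw [hk] at h1
    rw [← hA]
    nlinarith
  · intro h x₂ hx₂
    rw [hk]
    have hA' := hA.mpr h
    have hx2 : 0 < x₂ ^ 2 := by positivity
    nlinarith [mul_pos hA' hx2]
end

section
/- There exist gains k₁, k₂, l₁, l₂ > 0 such that every C¹ solution (x₁, x₂, e₁, e₂) : [0,∞) → ℝ⁴ of the continuous system ẋ₁ = x₂, ẋ₂ = −k₁⌈x₁⌋^{1/3} − k₂⌈x₂ + e₂⌋^{1/2}, ė₁ = −l₁⌈e₁⌋^{2/3} + e₂, ė₂ = −l₂⌈e₁⌋^{1/3} reaches the origin in finite time: there exists T ≥ 0 with x₁(t) = 0, x₂(t) = 0, e₁(t) = 0 and e₂(t) = 0 for all t ≥ T. -/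
set_option maxHeartbeats 1000000


private lemma sign_mul_abs' (z : ℝ) : Real.sign z * |z| = z := by
  rcases lt_trichotomy z 0 with h | h | h
  · rw [Real.sign_of_neg h, abs_of_neg h]; ring
  · subst h; simp
  · rw [Real.sign_of_pos h, abs_of_pos h]; ring

private lemma hasDerivAt_abspow (p q : ℝ) (z : ℝ) (hp : 1 < p) (hq : q = p - 1) :
    HasDerivAt (fun x : ℝ => |x| ^ p) (p * spow z q) z := by
  have h := hasDerivAt_abs_rpow z hp
  convert h using 1
  subst hq
  rcases eq_or_ne z 0 with rfl | hne
  · simp [spow]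
  · have habs : |z| ≠ 0 := abs_ne_zero.mpr hne
    have h1 : |z| ^ (p - 1) = |z| ^ (p - 2) * |z| := by
      rw [← Real.rpow_add_one habs (p - 2)]; ring_nf
    calc p * spow z (p - 1) = p * (|z| ^ (p - 1) * Real.sign z) := rfl
      _ = p * |z| ^ (p - 2) * (Real.sign z * |z|) := by rw [h1]; ring
      _ = p * |z| ^ (p - 2) * z := by rw [sign_mul_abs' z]

private lemma cube_decomp (z : ℝ) : ∃ σ s : ℝ, 0 ≤ s ∧
    (σ = 1 ∨ σ = -1 ∨ (σ = 0 ∧ s = 0)) ∧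
    spow z (1/3) = σ * s ∧ spow z (2/3) = σ * s ^ 2 ∧ z = σ * s ^ 3 ∧
    |z| ^ (5/3 : ℝ) = s ^ 5 := by
  refine ⟨Real.sign z, |z| ^ (1/3 : ℝ), Real.rpow_nonneg (abs_nonneg z) _, ?_, ?_, ?_, ?_, ?_⟩
  · rcases lt_trichotomy z 0 with h | h | h
    · exact Or.inr (Or.inl (Real.sign_of_neg h))
    · subst h
      exact Or.inr (Or.inr ⟨Real.sign_zero, by simp [Real.zero_rpow (by norm_num : (1/3:ℝ) ≠ 0)]⟩)
    · exact Or.inl (Real.sign_of_pos h)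
  · rw [spow]; ring
  · have h2 : (|z| ^ (1/3 : ℝ)) ^ (2:ℕ) = |z| ^ (2/3 : ℝ) := by
      rw [← Real.rpow_natCast (|z| ^ (1/3:ℝ)) 2, ← Real.rpow_mul (abs_nonneg z)]; norm_num
    rw [spow, ← h2]; ring
  · have h3 : (|z| ^ (1/3 : ℝ)) ^ (3:ℕ) = |z| := by
      rw [← Real.rpow_natCast (|z| ^ (1/3:ℝ)) 3, ← Real.rpow_mul (abs_nonneg z)]; norm_num
    calc z = Real.sign z * |z| := (sign_mul_abs' z).symm
      _ = Real.sign z * (|z| ^ (1/3:ℝ)) ^ (3:ℕ) := by rw [h3]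
  · rw [← Real.rpow_natCast (|z| ^ (1/3:ℝ)) 5, ← Real.rpow_mul (abs_nonneg z)]; norm_num

private lemma sqrt_decomp (z : ℝ) : ∃ τ w : ℝ, 0 ≤ w ∧
    (τ = 1 ∨ τ = -1 ∨ (τ = 0 ∧ w = 0)) ∧
    spow z (1/2) = τ * w ∧ spow z (3/2) = τ * w ^ 3 ∧ z = τ * w ^ 2 ∧
    |z| ^ (5/2 : ℝ) = w ^ 5 := by
  refine ⟨Real.sign z, |z| ^ (1/2 : ℝ), Real.rpow_nonneg (abs_nonneg z) _, ?_, ?_, ?_, ?_, ?_⟩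
  · rcases lt_trichotomy z 0 with h | h | h
    · exact Or.inr (Or.inl (Real.sign_of_neg h))
    · subst h
      exact Or.inr (Or.inr ⟨Real.sign_zero, by simp [Real.zero_rpow (by norm_num : (1/2:ℝ) ≠ 0)]⟩)
    · exact Or.inl (Real.sign_of_pos h)
  · rw [spow]; ring
  · have h3 : (|z| ^ (1/2 : ℝ)) ^ (3:ℕ) = |z| ^ (3/2 : ℝ) := by
      rw [← Real.rpow_natCast (|z| ^ (1/2:ℝ)) 3, ← Real.rpow_mul (abs_nonneg z)]; norm_num
    rw [spow, ← h3]; ring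
  · have h2 : (|z| ^ (1/2 : ℝ)) ^ (2:ℕ) = |z| := by
      rw [← Real.rpow_natCast (|z| ^ (1/2:ℝ)) 2, ← Real.rpow_mul (abs_nonneg z)]; norm_num
    calc z = Real.sign z * |z| := (sign_mul_abs' z).symm
      _ = Real.sign z * (|z| ^ (1/2:ℝ)) ^ (2:ℕ) := by rw [h2]
  · rw [← Real.rpow_natCast (|z| ^ (1/2:ℝ)) 5, ← Real.rpow_mul (abs_nonneg z)]; norm_num

private lemma quintic_amgm (s w : ℝ) (hs : 0 ≤ s) (hw : 0 ≤ w) :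
    5 * (s ^ 3 * w ^ 2) ≤ 3 * s ^ 5 + 2 * w ^ 5 := by
  nlinarith [mul_nonneg (sq_nonneg (s - w))
    (show (0:ℝ) ≤ 3*s^3 + 6*s^2*w + 4*s*w^2 + 2*w^3 by positivity)]

private lemma pow45_le (K x s w : ℝ) (hs : 0 ≤ s) (hw : 0 ≤ w) (hK : 1 ≤ K)
    (hx0 : 0 ≤ x) (hx : x ≤ K * (s ^ 5 + w ^ 5)) :
    x ^ (4/5 : ℝ) ≤ 2 * K * (s ^ 4 + w ^ 4) := by
  set M := max s w with hMdef
  have hM : 0 ≤ M := le_trans hs (le_max_left s w)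
  have hsM : s ≤ M := le_max_left s w
  have hwM : w ≤ M := le_max_right s w
  have h5 : s ^ 5 + w ^ 5 ≤ 2 * M ^ 5 := by
    have h1 := pow_le_pow_left₀ hs hsM 5
    have h2 := pow_le_pow_left₀ hw hwM 5
    linarith
  have hK0 : (0:ℝ) < K := lt_of_lt_of_le zero_lt_one hK
  have hx2 : x ≤ 2 * K * M ^ 5 := by nlinarith
  have step : x ^ (4/5 : ℝ) ≤ (2 * K * M ^ 5) ^ (4/5 : ℝ) :=
    Real.rpow_le_rpow hx0 hx2 (by norm_num)
  have hsplit : (2 * K * M ^ 5) ^ (4/5 : ℝ) = (2*K) ^ (4/5:ℝ) * (M ^ 5) ^ (4/5:ℝ) :=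
    Real.mul_rpow (by linarith) (by positivity)
  have hM4 : ((M ^ 5 : ℝ)) ^ (4/5 : ℝ) = M ^ 4 := by
    rw [← Real.rpow_natCast M 5, ← Real.rpow_mul hM]
    norm_num
  have h2K : (2*K) ^ (4/5:ℝ) ≤ 2*K := by
    calc (2*K) ^ (4/5:ℝ) ≤ (2*K) ^ (1:ℝ) :=
          Real.rpow_le_rpow_of_exponent_le (by linarith) (by norm_num)
      _ = 2*K := Real.rpow_one _
  have hM4' : M ^ 4 ≤ s ^ 4 + w ^ 4 := by
    rcases max_choice s w with h | h <;> rw [hMdef, h] <;> nlinarith [pow_nonneg hs 4, pow_nonneg hw 4]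
  calc x ^ (4/5:ℝ) ≤ (2*K) ^ (4/5:ℝ) * (M ^ 5) ^ (4/5:ℝ) := by rw [← hsplit]; exact step
    _ = (2*K) ^ (4/5:ℝ) * M ^ 4 := by rw [hM4]
    _ ≤ (2*K) * M ^ 4 := mul_le_mul_of_nonneg_right h2K (by positivity)
    _ ≤ 2*K*(s^4 + w^4) := by nlinarith

private lemma finite_time (c t₀ : ℝ) (hc : 0 < c) (V V' : ℝ → ℝ)
    (hd : ∀ t ≥ t₀, HasDerivAt V (V' t) t)
    (hnn : ∀ t ≥ t₀, 0 ≤ V t)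
    (hle : ∀ t ≥ t₀, V' t ≤ -c * V t ^ (4/5 : ℝ)) :
    ∃ T ≥ t₀, ∀ t ≥ T, V t = 0 := by
  have hanti : AntitoneOn V (Set.Ici t₀) := by
    apply antitoneOn_of_deriv_nonpos (convex_Ici t₀)
    · exact fun t ht => (hd t ht).continuousAt.continuousWithinAt
    · intro t ht
      rw [interior_Ici] at ht
      exact ((hd t (le_of_lt ht)).differentiableAt).differentiableWithinAt
    · intro t ht
      rw [interior_Ici] at ht
      rw [(hd t ht.le).deriv]
      have h1 : 0 ≤ V t ^ (4/5:ℝ) := Real.rpow_nonneg (hnn t ht.le) _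
      nlinarith [hle t ht.le]
  set T := t₀ + 5/c * (V t₀) ^ (1/5:ℝ) + 5/c with hTdef
  have hVt₀ : 0 ≤ V t₀ := hnn t₀ le_rfl
  have hr0 : 0 ≤ (V t₀) ^ (1/5:ℝ) := Real.rpow_nonneg hVt₀ _
  have h5c : 0 < 5/c := by positivity
  have hT0 : t₀ ≤ T := by rw [hTdef]; nlinarith [mul_nonneg h5c.le hr0]
  have hzero : ∃ t₁, t₁ ∈ Set.Icc t₀ T ∧ V t₁ = 0 := by
    by_contra hcon
    push_neg at hcon
    have hpos : ∀ t ∈ Set.Icc t₀ T, 0 < V t := fun t ht =>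
      lt_of_le_of_ne (hnn t ht.1) (Ne.symm (hcon t ht))
    have hanti2 : AntitoneOn (fun t => (V t) ^ (1/5:ℝ) + (c/5) * t) (Set.Icc t₀ T) := by
      apply antitoneOn_of_deriv_nonpos (convex_Icc t₀ T)
      · apply ContinuousOn.add
        · intro t ht
          exact ((Real.continuousAt_rpow_const (V t) (1/5) (Or.inr (by norm_num))).comp
            (hd t ht.1).continuousAt).continuousWithinAt
        · exact (continuous_const.mul continuous_id).continuousOn
      · intro t ht
        rw [interior_Icc] at ht
        have hVt : V t ≠ 0 := ne_of_gt (hpos t ⟨ht.1.le, ht.2.le⟩)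
        exact (((hd t ht.1.le).rpow_const (Or.inl hVt)).add
          ((hasDerivAt_id t).const_mul (c/5))).differentiableAt.differentiableWithinAt
      · intro t ht
        rw [interior_Icc] at ht
        have htt : t₀ ≤ t := ht.1.le
        have hVpos : 0 < V t := hpos t ⟨ht.1.le, ht.2.le⟩
        have hder : HasDerivAt (fun t => (V t)^(1/5:ℝ) + (c/5)*t)
            (V' t * (1/5) * (V t) ^ ((1/5:ℝ)-1) + (c/5)) t := by
          have h1 := (hd t htt).rpow_const (p := (1/5:ℝ)) (Or.inl (ne_of_gt hVpos))
          have h2 := (hasDerivAt_id t).const_mul (c/5)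
          have h3 := h1.add h2
          refine h3.congr_deriv ?_
          ring
        rw [hder.deriv]
        have hle' := hle t htt
        have hpow : (V t) ^ ((1/5:ℝ)-1) = (V t) ^ (-(4/5):ℝ) := by norm_num
        have key : (V t) ^ (-(4/5):ℝ) * (V t) ^ ((4/5):ℝ) = 1 := by
          rw [← Real.rpow_add hVpos]; norm_num
        have hp1 : 0 < (V t) ^ (-(4/5):ℝ) := Real.rpow_pos_of_pos hVpos _
        have hp2 : 0 < (V t) ^ ((4/5):ℝ) := Real.rpow_pos_of_pos hVpos _
        rw [hpow]
        nlinarith [mul_le_mul_of_nonneg_left hle' hp1.le]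
    have h1 := hanti2 (Set.left_mem_Icc.mpr hT0) (Set.right_mem_Icc.mpr hT0) hT0
    have h2 : 0 ≤ (V T) ^ (1/5:ℝ) := Real.rpow_nonneg (hnn T hT0) _
    have hc5 : (c/5) * (T - t₀) = (V t₀) ^ (1/5:ℝ) + 1 := by
      rw [hTdef]
      field_simp
      ring
    simp only [] at h1
    nlinarith
  obtain ⟨t₁, ht₁, hVt₁⟩ := hzero
  refine ⟨t₁, ht₁.1, fun t ht => le_antisymm ?_ (hnn t (le_trans ht₁.1 ht))⟩
  have := hanti (Set.mem_Ici.mpr ht₁.1) (Set.mem_Ici.mpr (le_trans ht₁.1 ht)) ht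
  rwa [hVt₁] at this

noncomputable def Verr (z v : ℝ) : ℝ :=
  |z| ^ (5/3 : ℝ) + (2/3) * |v| ^ (5/2 : ℝ) - (5/6) * (z * v)

noncomputable def Wfun (z v : ℝ) : ℝ :=
  |z| ^ (5/3 : ℝ) + |v| ^ (5/2 : ℝ) + z * v

noncomputable def DV (z v : ℝ) : ℝ :=
  (5/3) * spow z (2/3) * (-2 * spow z (2/3) + v)
    + (5/3) * spow v (3/2) * (-1 * spow z (1/3))
    - (5/6) * ((-2 * spow z (2/3) + v) * v + z * (-1 * spow z (1/3)))

noncomputable def DW (z v : ℝ) : ℝ :=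
  (5/3) * spow z (2/3) * v
    + (5/2) * spow v (3/2) * (-2 * spow z (1/3) - 3 * spow v (1/2))
    + (v * v + z * (-2 * spow z (1/3) - 3 * spow v (1/2)))

private lemma err_core (σ τ s w : ℝ) (hs : 0 ≤ s) (hw : 0 ≤ w)
    (hσ : σ = 1 ∨ σ = -1 ∨ (σ = 0 ∧ s = 0)) (hτ : τ = 1 ∨ τ = -1 ∨ (τ = 0 ∧ w = 0)) :
    (5/3) * (σ * s ^ 2) * (-2 * (σ * s ^ 2) + τ * w ^ 2)
      + (5/3) * (τ * w ^ 3) * (-1 * (σ * s))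
      - (5/6) * ((-2 * (σ * s ^ 2) + τ * w ^ 2) * (τ * w ^ 2) + (σ * s ^ 3) * (-1 * (σ * s)))
    ≤ -(1/12) * (s ^ 4 + w ^ 4) := by
  rcases hσ with h | h | ⟨h, h0⟩ <;> rcases hτ with g | g | ⟨g, g0⟩ <;> subst h <;> subst g <;>
      first
        | (subst h0; subst g0; norm_num)
        | (subst h0; nlinarith [pow_nonneg hw 4])
        | (subst g0; nlinarith [pow_nonneg hs 4])
        | nlinarith [sq_nonneg (s^2 - 5/19*w^2), mul_nonneg (mul_nonneg hs hw) (sq_nonneg (w - s)),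
            sq_nonneg (s*(s - w)), pow_nonneg hw 4, pow_nonneg hs 4,
            sq_nonneg (w*s - w^2/2), sq_nonneg (s*w), sq_nonneg (s^2), sq_nonneg (w^2)]

private lemma x_core (σ τ s w : ℝ) (hs : 0 ≤ s) (hw : 0 ≤ w)
    (hσ : σ = 1 ∨ σ = -1 ∨ (σ = 0 ∧ s = 0)) (hτ : τ = 1 ∨ τ = -1 ∨ (τ = 0 ∧ w = 0)) :
    (5/3) * (σ * s ^ 2) * (τ * w ^ 2)
      + (5/2) * (τ * w ^ 3) * (-2 * (σ * s) - 3 * (τ * w))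
      + ((τ * w ^ 2) * (τ * w ^ 2) + (σ * s ^ 3) * (-2 * (σ * s) - 3 * (τ * w)))
    ≤ -(1/4) * (s ^ 4 + w ^ 4) := by
  rcases hσ with h | h | ⟨h, h0⟩ <;> rcases hτ with g | g | ⟨g, g0⟩ <;> subst h <;> subst g <;>
      first
        | (subst h0; subst g0; norm_num)
        | (subst h0; nlinarith [pow_nonneg hw 4])
        | (subst g0; nlinarith [pow_nonneg hs 4])
        | nlinarith [sq_nonneg (s^2 - 37/18*w^2), sq_nonneg (s*s - 3/2*(s*w)),
            sq_nonneg (w*(s - w)), pow_nonneg hw 4, pow_nonneg hs 4,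
            mul_nonneg (mul_nonneg hs hw) (mul_nonneg hw hw),
            mul_nonneg (mul_nonneg hs hs) (mul_nonneg hs hw),
            sq_nonneg (s^2 - w^2), sq_nonneg (s*w)]

private lemma err_facts (z v : ℝ) :
    0 ≤ Verr z v ∧ DV z v ≤ -(1/36) * (Verr z v) ^ (4/5:ℝ) ∧
      (Verr z v = 0 → z = 0 ∧ v = 0) := by
  obtain ⟨σ, s, hs, hσ, h13, h23, hz, h53⟩ := cube_decomp z
  obtain ⟨τ, w, hw, hτ, h12, h32, hv, h52⟩ := sqrt_decomp v
  have hVeq : Verr z v = s ^ 5 + (2/3) * w ^ 5 - (5/6) * ((σ * s ^ 3) * (τ * w ^ 2)) := by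
    rw [Verr, h53, h52, ← hz, ← hv]
  have hq := quintic_amgm s w hs hw
  have hlb : (1/2) * s ^ 5 + (1/3) * w ^ 5 ≤ Verr z v := by
    rw [hVeq]
    rcases hσ with h | h | ⟨h, h0⟩ <;> rcases hτ with g | g | ⟨g, g0⟩ <;> subst h <;> subst g <;>
      first
        | (subst h0; subst g0; norm_num)
        | (subst h0; nlinarith [pow_nonneg hw 5, pow_nonneg hs 5])
        | (subst g0; nlinarith [pow_nonneg hw 5, pow_nonneg hs 5])
        | nlinarith [pow_nonneg hs 5, pow_nonneg hw 5, mul_nonneg (pow_nonneg hs 3) (pow_nonneg hw 2)]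
  have hub : Verr z v ≤ (3/2) * (s ^ 5 + w ^ 5) := by
    rw [hVeq]
    rcases hσ with h | h | ⟨h, h0⟩ <;> rcases hτ with g | g | ⟨g, g0⟩ <;> subst h <;> subst g <;>
      first
        | (subst h0; subst g0; norm_num)
        | (subst h0; nlinarith [pow_nonneg hw 5, pow_nonneg hs 5])
        | (subst g0; nlinarith [pow_nonneg hw 5, pow_nonneg hs 5])
        | nlinarith [pow_nonneg hs 5, pow_nonneg hw 5, mul_nonneg (pow_nonneg hs 3) (pow_nonneg hw 2)]
  have hnn : 0 ≤ Verr z v := by nlinarith [pow_nonneg hs 5, pow_nonneg hw 5]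
  refine ⟨hnn, ?_, ?_⟩
  · have hcore : DV z v ≤ -(1/12) * (s ^ 4 + w ^ 4) := by
      have h := err_core σ τ s w hs hw hσ hτ
      calc DV z v
          = (5/3) * (σ * s ^ 2) * (-2 * (σ * s ^ 2) + τ * w ^ 2)
            + (5/3) * (τ * w ^ 3) * (-1 * (σ * s))
            - (5/6) * ((-2 * (σ * s ^ 2) + τ * w ^ 2) * (τ * w ^ 2)
              + (σ * s ^ 3) * (-1 * (σ * s))) := by
            rw [DV, h23, h32, h13, ← hz, ← hv]
        _ ≤ -(1/12) * (s ^ 4 + w ^ 4) := h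
    have h45 : (Verr z v) ^ (4/5:ℝ) ≤ 2 * (3/2) * (s ^ 4 + w ^ 4) :=
      pow45_le (3/2) _ s w hs hw (by norm_num) hnn hub
    nlinarith
  · intro h0
    have hs5 : s = 0 := by
      have h1 : s ^ 5 ≤ 0 := by nlinarith [pow_nonneg hw 5]
      have h2 : s ^ 5 = 0 := le_antisymm h1 (pow_nonneg hs 5)
      exact pow_eq_zero_iff (by norm_num) |>.mp h2
    have hw5 : w = 0 := by
      have h1 : w ^ 5 ≤ 0 := by nlinarith [pow_nonneg hs 5]
      have h2 : w ^ 5 = 0 := le_antisymm h1 (pow_nonneg hw 5)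
      exact pow_eq_zero_iff (by norm_num) |>.mp h2
    constructor
    · rw [hz, hs5]; ring
    · rw [hv, hw5]; ring

private lemma x_facts (z v : ℝ) :
    0 ≤ Wfun z v ∧ DW z v ≤ -(5/64) * (Wfun z v) ^ (4/5:ℝ) ∧
      (Wfun z v = 0 → z = 0 ∧ v = 0) := by
  obtain ⟨σ, s, hs, hσ, h13, h23, hz, h53⟩ := cube_decomp z
  obtain ⟨τ, w, hw, hτ, h12, h32, hv, h52⟩ := sqrt_decomp v
  have hWeq : Wfun z v = s ^ 5 + w ^ 5 + (σ * s ^ 3) * (τ * w ^ 2) := by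
    rw [Wfun, h53, h52, ← hz, ← hv]
  have hq := quintic_amgm s w hs hw
  have hlb : (2/5) * s ^ 5 + (3/5) * w ^ 5 ≤ Wfun z v := by
    rw [hWeq]
    rcases hσ with h | h | ⟨h, h0⟩ <;> rcases hτ with g | g | ⟨g, g0⟩ <;> subst h <;> subst g <;>
      first
        | (subst h0; subst g0; norm_num)
        | (subst h0; nlinarith [pow_nonneg hw 5, pow_nonneg hs 5])
        | (subst g0; nlinarith [pow_nonneg hw 5, pow_nonneg hs 5])
        | nlinarith [pow_nonneg hs 5, pow_nonneg hw 5, mul_nonneg (pow_nonneg hs 3) (pow_nonneg hw 2)]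
  have hub : Wfun z v ≤ (8/5) * (s ^ 5 + w ^ 5) := by
    rw [hWeq]
    rcases hσ with h | h | ⟨h, h0⟩ <;> rcases hτ with g | g | ⟨g, g0⟩ <;> subst h <;> subst g <;>
      first
        | (subst h0; subst g0; norm_num)
        | (subst h0; nlinarith [pow_nonneg hw 5, pow_nonneg hs 5])
        | (subst g0; nlinarith [pow_nonneg hw 5, pow_nonneg hs 5])
        | nlinarith [pow_nonneg hs 5, pow_nonneg hw 5, mul_nonneg (pow_nonneg hs 3) (pow_nonneg hw 2)]
  have hnn : 0 ≤ Wfun z v := by nlinarith [pow_nonneg hs 5, pow_nonneg hw 5]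
  refine ⟨hnn, ?_, ?_⟩
  · have hcore : DW z v ≤ -(1/4) * (s ^ 4 + w ^ 4) := by
      have h := x_core σ τ s w hs hw hσ hτ
      calc DW z v
          = (5/3) * (σ * s ^ 2) * (τ * w ^ 2)
            + (5/2) * (τ * w ^ 3) * (-2 * (σ * s) - 3 * (τ * w))
            + ((τ * w ^ 2) * (τ * w ^ 2) + (σ * s ^ 3) * (-2 * (σ * s) - 3 * (τ * w))) := by
            rw [DW, h23, h32, h13, h12, ← hz, ← hv]
        _ ≤ -(1/4) * (s ^ 4 + w ^ 4) := h
    have h45 : (Wfun z v) ^ (4/5:ℝ) ≤ 2 * (8/5) * (s ^ 4 + w ^ 4) :=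
      pow45_le (8/5) _ s w hs hw (by norm_num) hnn hub
    nlinarith
  · intro h0
    have hs5 : s = 0 := by
      have h1 : s ^ 5 ≤ 0 := by nlinarith [pow_nonneg hw 5]
      have h2 : s ^ 5 = 0 := le_antisymm h1 (pow_nonneg hs 5)
      exact pow_eq_zero_iff (by norm_num) |>.mp h2
    have hw5 : w = 0 := by
      have h1 : w ^ 5 ≤ 0 := by nlinarith [pow_nonneg hs 5]
      have h2 : w ^ 5 = 0 := le_antisymm h1 (pow_nonneg hw 5)
      exact pow_eq_zero_iff (by norm_num) |>.mp h2
    constructor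
    · rw [hz, hs5]; ring
    · rw [hv, hw5]; ring

/-- Finite-time stability of the unperturbed output-feedback closed loop without the
integral term: there are gains `k₁, k₂, l₁, l₂ > 0` such that every `C¹` solution of
`ẋ₁ = x₂`, `ẋ₂ = −k₁⌈x₁⌋^{1/3} − k₂⌈x₂+e₂⌋^{1/2}`, `ė₁ = −l₁⌈e₁⌋^{2/3} + e₂`,
`ė₂ = −l₂⌈e₁⌋^{1/3}` reaches the origin in finite time. -/
theorem output_feedback_unperturbed_finite_time :
    ∃ k₁ > (0 : ℝ), ∃ k₂ > (0 : ℝ), ∃ l₁ > (0 : ℝ), ∃ l₂ > (0 : ℝ),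
      ∀ x₁ x₂ e₁ e₂ : ℝ → ℝ,
        (∀ t ≥ (0 : ℝ), HasDerivAt x₁ (x₂ t) t) →
        (∀ t ≥ (0 : ℝ), HasDerivAt x₂
          (-k₁ * spow (x₁ t) (1/3) - k₂ * spow (x₂ t + e₂ t) (1/2)) t) →
        (∀ t ≥ (0 : ℝ), HasDerivAt e₁ (-l₁ * spow (e₁ t) (2/3) + e₂ t) t) →
        (∀ t ≥ (0 : ℝ), HasDerivAt e₂ (-l₂ * spow (e₁ t) (1/3)) t) →
        ∃ T ≥ (0 : ℝ), ∀ t ≥ T, x₁ t = 0 ∧ x₂ t = 0 ∧ e₁ t = 0 ∧ e₂ t = 0 := by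
  refine ⟨2, by norm_num, 3, by norm_num, 2, by norm_num, 1, by norm_num, ?_⟩
  intro x₁ x₂ e₁ e₂ hx₁ hx₂ he₁ he₂
  -- Phase 1 : the error subsystem converges in finite time
  have hdV : ∀ t ≥ (0:ℝ), HasDerivAt (fun u => Verr (e₁ u) (e₂ u)) (DV (e₁ t) (e₂ t)) t := by
    intro t ht
    have hd1 := he₁ t ht
    have hd2 := he₂ t ht
    have H1 : HasDerivAt (fun u => |e₁ u| ^ (5/3:ℝ))
        ((5/3) * spow (e₁ t) (2/3) * (-2 * spow (e₁ t) (2/3) + e₂ t)) t := by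
      have h := (hasDerivAt_abspow (5/3) (2/3) (e₁ t) (by norm_num) (by norm_num)).comp t hd1
      exact h
    have H2 : HasDerivAt (fun u => (2/3) * |e₂ u| ^ (5/2:ℝ))
        ((2/3) * ((5/2) * spow (e₂ t) (3/2) * (-1 * spow (e₁ t) (1/3)))) t := by
      have h := ((hasDerivAt_abspow (5/2) (3/2) (e₂ t) (by norm_num)
        (by norm_num)).comp t hd2).const_mul (2/3 : ℝ)
      exact h
    have H3 : HasDerivAt (fun u => (5/6) * (e₁ u * e₂ u))
        ((5/6) * ((-2 * spow (e₁ t) (2/3) + e₂ t) * e₂ t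
          + e₁ t * (-1 * spow (e₁ t) (1/3)))) t := (hd1.mul hd2).const_mul (5/6 : ℝ)
    have HV := (H1.add H2).sub H3
    have hfun : (fun u => |e₁ u| ^ (5/3:ℝ) + (2/3) * |e₂ u| ^ (5/2:ℝ)
        - (5/6) * (e₁ u * e₂ u)) = (fun u => Verr (e₁ u) (e₂ u)) := by
      funext u; rw [Verr]
    rw [← hfun]
    refine HV.congr_deriv ?_
    rw [DV]; ring
  obtain ⟨T₁, hT₁0, hT₁⟩ :=
    finite_time (1/36) 0 (by norm_num) (fun u => Verr (e₁ u) (e₂ u)) (fun u => DV (e₁ u) (e₂ u))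
      hdV (fun t _ => (err_facts (e₁ t) (e₂ t)).1)
      (fun t _ => (err_facts (e₁ t) (e₂ t)).2.1)
  have he0 : ∀ t ≥ T₁, e₁ t = 0 ∧ e₂ t = 0 :=
    fun t ht => (err_facts (e₁ t) (e₂ t)).2.2 (hT₁ t ht)
  -- Phase 2 : after `T₁`, the state subsystem is unperturbed and converges
  have hx₂' : ∀ t ≥ T₁, HasDerivAt x₂ (-2 * spow (x₁ t) (1/3) - 3 * spow (x₂ t) (1/2)) t := by
    intro t ht
    have h := hx₂ t (le_trans hT₁0 ht)
    rwa [(he0 t ht).2, add_zero] at h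
  have hdW : ∀ t ≥ T₁, HasDerivAt (fun u => Wfun (x₁ u) (x₂ u)) (DW (x₁ t) (x₂ t)) t := by
    intro t ht
    have hd1 := hx₁ t (le_trans hT₁0 ht)
    have hd2 := hx₂' t ht
    have H1 : HasDerivAt (fun u => |x₁ u| ^ (5/3:ℝ))
        ((5/3) * spow (x₁ t) (2/3) * x₂ t) t := by
      have h := (hasDerivAt_abspow (5/3) (2/3) (x₁ t) (by norm_num) (by norm_num)).comp t hd1
      exact h
    have H2 : HasDerivAt (fun u => |x₂ u| ^ (5/2:ℝ))
        ((5/2) * spow (x₂ t) (3/2) * (-2 * spow (x₁ t) (1/3) - 3 * spow (x₂ t) (1/2))) t := by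
      have h := (hasDerivAt_abspow (5/2) (3/2) (x₂ t) (by norm_num) (by norm_num)).comp t hd2
      exact h
    have H3 : HasDerivAt (fun u => x₁ u * x₂ u)
        (x₂ t * x₂ t + x₁ t * (-2 * spow (x₁ t) (1/3) - 3 * spow (x₂ t) (1/2))) t :=
      hd1.mul hd2
    have HW := (H1.add H2).add H3
    have hfun : (fun u => |x₁ u| ^ (5/3:ℝ) + |x₂ u| ^ (5/2:ℝ) + x₁ u * x₂ u)
        = (fun u => Wfun (x₁ u) (x₂ u)) := by
      funext u; rw [Wfun]
    rw [← hfun]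
    refine HW.congr_deriv ?_
    try simp only [DW]; try ring
  obtain ⟨T₂, hT₂1, hT₂⟩ :=
    finite_time (5/64) T₁ (by norm_num) (fun u => Wfun (x₁ u) (x₂ u)) (fun u => DW (x₁ u) (x₂ u))
      hdW (fun t _ => (x_facts (x₁ t) (x₂ t)).1)
      (fun t _ => (x_facts (x₁ t) (x₂ t)).2.1)
  refine ⟨T₂, le_trans hT₁0 hT₂1, fun t ht => ?_⟩
  have hx0 := (x_facts (x₁ t) (x₂ t)).2.2 (hT₂ t ht)
  have he0' := he0 t (le_trans hT₂1 ht)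
  exact ⟨hx0.1, hx0.2, he0'.1, he0'.2⟩
end
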